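/- arXiv:2108.06657 — 8 statements merged into one kernel-verified Lean document; each statement's English description precedes it below -/
import Mathlib

section
/- The constants k·1 form a W(1)-submodule of A(1) (every derivation of A(1) kills constants), and the quotient module A(1)/k·1 is a simple W(1)-module of dimension p - 1. -/
open Polynomial

/-- The truncated polynomial ring `A(1) = k[X]/(X^p)`. -/
abbrev TruncPoly (k : Type) [Field k] (p : ℕ) : Type :=
  Polynomial k ⧸ Ideal.span {(X : Polynomial k) ^ p}

/-!
Every derivation kills `1`. Write `x` for the class of `X`. Since `X ^ p` has derivative zero in
characteristic `p`, `d/dX` descends to a derivation `∂` of `A(1)`, and `b • ∂` sends `x` to `b`,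
so a derivation-stable subspace containing `x` is everything. If a stable `N` contains some
`a ∉ k·1`, represent `a` by `f` with `1 ≤ deg f = d < p`: then `∂^(d-1) a` is affine in `x` with
linear coefficient `d! · lc f ≠ 0`, hence `x ∈ N`. The dimension count comes from the basis
`1, x, …, x^(p-1)`.
-/

open Module

namespace Polynomial

variable {R : Type*} [CommRing R] {p : ℕ} [CharP R p]

theorem X_pow_char_dvd_derivative {f : R[X]} (h : X ^ p ∣ f) : X ^ p ∣ derivative f := by
  obtain ⟨q, rfl⟩ := h
  simp [derivative_mul, derivative_X_pow]

theorem natDegree_iterate_derivative_natDegree_sub_one [IsDomain R] {f : R[X]}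
    (hf0 : 0 < f.natDegree) (hfp : f.natDegree < p) :
    (derivative^[f.natDegree - 1] f).natDegree = 1 := by
  set d := f.natDegree
  have hp : p.Prime := CharP.char_is_prime_of_two_le R p (by omega)
  have hcoeff :
      (derivative^[d - 1] f).coeff 1 = (d.descFactorial (d - 1) : R) * f.leadingCoeff := by
    rw [coeff_iterate_derivative, nsmul_eq_mul, Nat.add_sub_cancel' hf0]
    rfl
  have hdesc : (d.descFactorial (d - 1) : R) ≠ 0 := by
    rw [Ne, CharP.cast_eq_zero_iff R p]
    intro hdvd
    have := (hp.dvd_factorial).mp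
      (hdvd.trans ⟨_, (Nat.factorial_mul_descFactorial (Nat.sub_le d 1)).symm.trans (mul_comm _ _)⟩)
    omega
  refine le_antisymm ((natDegree_iterate_derivative f _).trans (by omega))
    (le_natDegree_of_ne_zero ?_)
  rw [hcoeff]
  exact mul_ne_zero hdesc (leadingCoeff_ne_zero.mpr (ne_zero_of_natDegree_gt hf0))

end Polynomial

theorem Derivation.apply_eq_zero_of_mem_span_one {R A M : Type*} [CommSemiring R]
    [CommSemiring A] [Algebra R A] [AddCommMonoid M] [Module A M] [Module R M]
    (D : Derivation R A M) {a : A} (ha : a ∈ Submodule.span R {1}) : D a = 0 := by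
  obtain ⟨c, rfl⟩ := Submodule.mem_span_singleton.mp ha
  simp

namespace TruncPoly

variable {k : Type} [Field k] {p : ℕ}

variable (k p) in
noncomputable def mk : k[X] →ₐ[k] TruncPoly k p := Ideal.Quotient.mkₐ k _

theorem mk_surjective : Function.Surjective (mk k p) := Ideal.Quotient.mkₐ_surjective k _

theorem mk_C (c : k) : mk k p (C c) = c • 1 := by
  rw [← algebraMap_eq, AlgHom.commutes, Algebra.algebraMap_eq_smul_one]

theorem exists_degree_lt_mk_eq (a : TruncPoly k p) :
    ∃ f : k[X], f.degree < p ∧ mk k p f = a := by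
  obtain ⟨f, rfl⟩ := mk_surjective a
  refine ⟨f %ₘ X ^ p, ?_, ?_⟩
  · simpa using degree_modByMonic_lt f (monic_X_pow p)
  · exact AdjoinRoot.mk_leftInverse (monic_X_pow p) (mk k p f)

instance : Module.Finite k (TruncPoly k p) :=
  (AdjoinRoot.powerBasis (pow_ne_zero p (X_ne_zero (R := k)))).finite

theorem finrank_eq : finrank k (TruncPoly k p) = p :=
  (AdjoinRoot.powerBasis (pow_ne_zero p X_ne_zero)).finrank.trans (natDegree_X_pow p)

variable [CharP k p]

noncomputable def deriv : Derivation k (TruncPoly k p) (TruncPoly k p) :=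
  Derivation.liftOfSurjective mk_surjective (d := derivative') fun f hf => by
    rw [mk, Ideal.Quotient.mkₐ_eq_mk, Ideal.Quotient.eq_zero_iff_mem,
      Ideal.mem_span_singleton] at hf ⊢
    exact X_pow_char_dvd_derivative hf

theorem deriv_mk (f : k[X]) : deriv (mk k p f) = mk k p (derivative f) := by
  rw [deriv, Derivation.liftOfSurjective_apply]; rfl

theorem iterate_deriv_mk (n : ℕ) (f : k[X]) : deriv^[n] (mk k p f) = mk k p (derivative^[n] f) := by
  induction n generalizing f with
  | zero => rfl
  | succ n ih => rw [Function.iterate_succ_apply, Function.iterate_succ_apply, deriv_mk, ih]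

theorem mk_X_mem_of_notMem_span_one {N : Submodule k (TruncPoly k p)}
    (h1 : (1 : TruncPoly k p) ∈ N) (hN : Set.MapsTo deriv (N : Set (TruncPoly k p)) N)
    {a : TruncPoly k p} (haN : a ∈ N) (ha : a ∉ Submodule.span k {1}) : mk k p X ∈ N := by
  obtain ⟨f, hfp, rfl⟩ := exists_degree_lt_mk_eq a
  have hf0 : 0 < f.natDegree := by
    by_contra! h
    obtain ⟨c, rfl⟩ := natDegree_eq_zero.mp (Nat.le_zero.mp h)
    exact ha (mk_C c ▸ Submodule.smul_mem _ c (Submodule.mem_span_singleton_self 1))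
  have hfp' : f.natDegree < p := by
    rwa [degree_eq_natDegree (ne_zero_of_natDegree_gt hf0), Nat.cast_lt] at hfp
  set g := derivative^[f.natDegree - 1] f
  have hg : g.natDegree = 1 := natDegree_iterate_derivative_natDegree_sub_one hf0 hfp'
  have hgN : mk k p g ∈ N := iterate_deriv_mk (p := p) (f.natDegree - 1) f ▸ hN.iterate _ haN
  rw [eq_X_add_C_of_natDegree_le_one hg.le, map_add, map_mul, mk_C, mk_C, smul_one_mul] at hgN
  have hcoeff : g.coeff 1 ≠ 0 := by
    simpa [← hg] using leadingCoeff_ne_zero.mpr (ne_zero_of_natDegree_gt (hg ▸ one_pos))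
  exact (Submodule.smul_mem_iff N hcoeff).mp ((N.add_mem_iff_left (N.smul_mem _ h1)).mp hgN)

theorem eq_top_of_mk_X_mem {N : Submodule k (TruncPoly k p)}
    (hN : ∀ D : Derivation k (TruncPoly k p) (TruncPoly k p), Set.MapsTo D N N)
    (hX : mk k p X ∈ N) : N = ⊤ := by
  refine Submodule.eq_top_iff'.mpr fun b => ?_
  obtain ⟨g, rfl⟩ := mk_surjective b
  have := hN (mk k p g • deriv) hX
  rw [Derivation.smul_apply, deriv_mk] at this
  simpa using this

end TruncPoly

theorem constants_submodule_and_simple_quotient_general (p : ℕ) (k : Type) [Field k]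
    [CharP k p] (hp : p.Prime) :
    (∀ D : Derivation k (TruncPoly k p) (TruncPoly k p),
      ∀ a ∈ Submodule.span k {(1 : TruncPoly k p)},
        D a ∈ Submodule.span k {(1 : TruncPoly k p)}) ∧
    (∀ N : Submodule k (TruncPoly k p),
      Submodule.span k {(1 : TruncPoly k p)} ≤ N →
      (∀ D : Derivation k (TruncPoly k p) (TruncPoly k p), ∀ a ∈ N, D a ∈ N) →
      N = Submodule.span k {(1 : TruncPoly k p)} ∨ N = ⊤) ∧
    Module.finrank k (TruncPoly k p ⧸ Submodule.span k {(1 : TruncPoly k p)}) = p - 1 := by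
  refine ⟨fun D a ha => ?_, fun N h1 hN => ?_, ?_⟩
  · rw [D.apply_eq_zero_of_mem_span_one ha]
    exact zero_mem _
  · refine or_iff_not_imp_left.mpr fun hne => ?_
    obtain ⟨a, haN, ha⟩ := SetLike.exists_of_lt (lt_of_le_of_ne h1 (Ne.symm hne))
    exact TruncPoly.eq_top_of_mk_X_mem hN <| TruncPoly.mk_X_mem_of_notMem_span_one
      (h1 (Submodule.mem_span_singleton_self 1)) (hN _) haN ha
  · have : Nontrivial (TruncPoly k p) :=
      Module.nontrivial_of_finrank_pos (TruncPoly.finrank_eq (k := k) (p := p) ▸ hp.pos)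
    rw [Submodule.finrank_quotient, TruncPoly.finrank_eq, finrank_span_singleton one_ne_zero]

/-- the constants `k·1` form a `W(1)`-submodule of `A(1)` (every
derivation kills constants), and the quotient `A(1)/k·1` is a simple `W(1)`-module of
dimension `p - 1`: any subspace containing `k·1` and stable under all derivations is
either `k·1` or all of `A(1)`. -/
theorem constants_submodule_and_simple_quotient (p : ℕ) (k : Type) [Field k] [IsAlgClosed k]
    [CharP k p] (hp : p.Prime) (hp3 : 3 < p) :
    (∀ D : Derivation k (TruncPoly k p) (TruncPoly k p),
      ∀ a ∈ Submodule.span k {(1 : TruncPoly k p)},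
        D a ∈ Submodule.span k {(1 : TruncPoly k p)}) ∧
    (∀ N : Submodule k (TruncPoly k p),
      Submodule.span k {(1 : TruncPoly k p)} ≤ N →
      (∀ D : Derivation k (TruncPoly k p) (TruncPoly k p), ∀ a ∈ N, D a ∈ N) →
      N = Submodule.span k {(1 : TruncPoly k p)} ∨ N = ⊤) ∧
    Module.finrank k (TruncPoly k p ⧸ Submodule.span k {(1 : TruncPoly k p)}) = p - 1 :=
  constants_submodule_and_simple_quotient_general p k hp
end

section
/- For λ ∈ {1, ..., p-2}, the module Z(λ) with basis m_0,...,m_{p-1} and action e_k·m_j = (j+k+1+(k+1)λ)m_{j+k} is a simple W(1)-module. -/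
/-- The action of the Witt-algebra basis element `e_κ` (`-1 ≤ κ ≤ p-2`) on the
`p`-dimensional Verma-type module `Z(λ)` with basis `m_0, …, m_{p-1}`:
`e_κ · m_j = (j + κ + 1 + (κ+1)λ) m_{j+κ}`, where `m_i = 0` for `i < 0` or `i > p-1`.
Here elements of `Z(λ)` are coordinate functions `Fin p → k` w.r.t. this basis. -/

noncomputable def vermaOp (p : ℕ) (k : Type) [Field k] (lam κ : ℤ) :
    (Fin p → k) →ₗ[k] (Fin p → k) where
  toFun f := fun n =>
    if h : 0 ≤ (n : ℤ) - κ ∧ (n : ℤ) - κ < p then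
      (((n : ℤ) + 1 + (κ + 1) * lam)) • f ⟨((n : ℤ) - κ).toNat, by omega⟩
    else 0
  map_add' f g := by
    funext n
    simp only [Pi.add_apply]
    by_cases h : 0 ≤ (n : ℤ) - κ ∧ (n : ℤ) - κ < p
    · simp only [dif_pos h, Pi.add_apply, smul_add]
    · simp only [dif_neg h, add_zero]
  map_smul' c f := by
    funext n
    simp only [Pi.smul_apply, RingHom.id_apply]
    by_cases h : 0 ≤ (n : ℤ) - κ ∧ (n : ℤ) - κ < p
    · rw [dif_pos h, dif_pos h]; exact smul_comm _ _ _
    · rw [dif_neg h, dif_neg h, smul_zero]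

lemma witt_not_dvd {p m : ℤ} (h1 : 0 < m) (h2 : m < p) : ¬ p ∣ m := by
  rintro ⟨c, rfl⟩
  rcases le_or_gt c 0 with h | h
  · nlinarith
  · nlinarith

lemma witt_cast_ne {p : ℕ} {k : Type} [Field k] [CharP k p] {m : ℤ}
    (h1 : 0 < m) (h2 : m < p) : ((m : ℤ) : k) ≠ 0 := by
  rw [Ne, CharP.intCast_eq_zero_iff k p]
  exact witt_not_dvd h1 h2

lemma witt_op_single (p : ℕ) (k : Type) [Field k] (lam κ : ℤ) (a b : Fin p)
    (hab : (b : ℤ) = (a : ℤ) + κ) :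
    vermaOp p k lam κ (Pi.single a 1) =
      (((b : ℤ) + 1 + (κ + 1) * lam : ℤ) : k) • (Pi.single b 1 : Fin p → k) := by
  funext n
  simp only [vermaOp, LinearMap.coe_mk, AddHom.coe_mk, Pi.smul_apply]
  by_cases hn : n = b
  · subst hn
    have hc : 0 ≤ (n : ℤ) - κ ∧ (n : ℤ) - κ < p := by
      constructor <;> omega
    rw [dif_pos hc]
    have hidx : (⟨((n : ℤ) - κ).toNat, by omega⟩ : Fin p) = a := by
      ext; simp; omega
    rw [hidx, Pi.single_eq_same, Pi.single_eq_same, zsmul_eq_mul, smul_eq_mul]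
  · have hnb : (n : ℤ) ≠ (b : ℤ) := by
      simpa [Fin.ext_iff] using hn
    rw [Pi.single_eq_of_ne hn, smul_zero]
    by_cases hc : 0 ≤ (n : ℤ) - κ ∧ (n : ℤ) - κ < p
    · rw [dif_pos hc]
      have : (⟨((n : ℤ) - κ).toNat, by omega⟩ : Fin p) ≠ a := by
        simp only [Ne, Fin.ext_iff]; omega
      rw [Pi.single_eq_of_ne this, smul_zero]
    · rw [dif_neg hc]

/-- for `λ ∈ {1, …, p-2}`, the module `Z(λ)` is a simple `W(1)`-module:
its only subspaces invariant under all the operators `e_κ`, `-1 ≤ κ ≤ p-2`, are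
`⊥` and `⊤`. -/
theorem verma_simple (p : ℕ) (k : Type) [Field k] [IsAlgClosed k] [CharP k p]
    (hp : p.Prime) (hp3 : 3 < p) (lam : ℤ) (hl1 : 1 ≤ lam) (hl2 : lam ≤ (p : ℤ) - 2) :
    ∀ N : Submodule k (Fin p → k),
      (∀ κ : ℤ, -1 ≤ κ → κ ≤ (p : ℤ) - 2 → ∀ f ∈ N, vermaOp p k lam κ f ∈ N) →
      N = ⊥ ∨ N = ⊤ := by
  intro N hN
  by_cases hbot : N = ⊥
  · exact Or.inl hbot
  right
  have h0p : (0 : ℕ) < p := hp.pos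
  have hPrimeZ : Prime (p : ℤ) := Nat.prime_iff_prime_int.mp hp
  obtain ⟨f, hfN, hf0⟩ := (Submodule.ne_bot_iff N).mp hbot
  -- Step 1: from any nonzero element of N we produce `m₀`.
  have key : ∀ j : ℕ, ∀ f, f ∈ N → f ≠ 0 → (∀ i : Fin p, j < (i : ℕ) → f i = 0) →
      (Pi.single (⟨0, h0p⟩ : Fin p) 1 : Fin p → k) ∈ N := by
    intro j
    induction j with
    | zero =>
      intro f hfN hf0 hsupp
      have hf00 : f ⟨0, h0p⟩ ≠ 0 := by
        intro h
        apply hf0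
        funext i
        simp only [Pi.zero_apply]
        rcases Nat.eq_zero_or_pos (i : ℕ) with hi | hi
        · have : i = ⟨0, h0p⟩ := by ext; simpa using hi
          rw [this, h]
        · exact hsupp i hi
      have heq : (Pi.single (⟨0, h0p⟩ : Fin p) 1 : Fin p → k) = (f ⟨0, h0p⟩)⁻¹ • f := by
        funext i
        rcases Nat.eq_zero_or_pos (i : ℕ) with hi | hi
        · have hi0 : i = ⟨0, h0p⟩ := by ext; simpa using hi
          subst hi0
          simp [Pi.single_eq_same, inv_mul_cancel₀ hf00]
        · have hne : i ≠ ⟨0, h0p⟩ := by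
            intro h; rw [h] at hi; simp at hi
          rw [Pi.single_eq_of_ne hne]
          simp [hsupp i hi]
      rw [heq]
      exact N.smul_mem _ hfN
    | succ j ih =>
      intro f hfN hf0 hsupp
      by_cases hz : ∀ i : Fin p, j < (i : ℕ) → f i = 0
      · exact ih f hfN hf0 hz
      push_neg at hz
      obtain ⟨i, hij, hfi⟩ := hz
      have hival : (i : ℕ) = j + 1 := by
        have : ¬ (j + 1 < (i : ℕ)) := fun h => hfi (hsupp i h)
        omega
      set g := vermaOp p k lam (-1) f with hg
      have hgN : g ∈ N := hN (-1) le_rfl (by omega) f hfN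
      have hgval : ∀ n : Fin p, g n =
          if h : (n : ℕ) + 1 < p then (((n : ℤ) + 1 : ℤ) : k) * f ⟨(n : ℕ) + 1, h⟩ else 0 := by
        intro n
        rw [hg]
        simp only [vermaOp, LinearMap.coe_mk, AddHom.coe_mk]
        by_cases h : (n : ℕ) + 1 < p
        · rw [dif_pos (by constructor <;> omega), dif_pos h]
          have hidx : (⟨((n : ℤ) - (-1)).toNat, by omega⟩ : Fin p) = ⟨(n : ℕ) + 1, h⟩ := by
            ext; simp only [Fin.val_mk]; omega
          rw [hidx, zsmul_eq_mul]
          push_cast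
          ring
        · rw [dif_neg (by omega), dif_neg h]
      have hjlt : j < p := by have := i.isLt; omega
      have hg0 : g ≠ 0 := by
        intro h
        have h1 : g ⟨j, hjlt⟩ = 0 := by rw [h]; rfl
        rw [hgval ⟨j, hjlt⟩] at h1
        have hc : (j : ℕ) + 1 < p := by have := i.isLt; omega
        rw [dif_pos hc] at h1
        have hidx : (⟨j + 1, hc⟩ : Fin p) = i := by ext; simp [hival]
        rw [hidx] at h1
        have hcast : ((((⟨j, hjlt⟩ : Fin p) : ℤ) + 1 : ℤ) : k) ≠ 0 :=
          witt_cast_ne (p := p) (k := k) (by simp only [Fin.val_mk]; omega)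
            (by simp only [Fin.val_mk]; omega)
        rcases mul_eq_zero.mp h1 with h2 | h2
        · exact hcast h2
        · exact hfi h2
      have hgsupp : ∀ i' : Fin p, j < (i' : ℕ) → g i' = 0 := by
        intro i' hi'
        rw [hgval i']
        by_cases h : (i' : ℕ) + 1 < p
        · rw [dif_pos h, hsupp ⟨(i' : ℕ) + 1, h⟩ (Nat.succ_lt_succ hi'), mul_zero]
        · rw [dif_neg h]
      exact ih g hgN hg0 hgsupp
  have d0 : (Pi.single (⟨0, h0p⟩ : Fin p) 1 : Fin p → k) ∈ N :=
    key (p - 1) f hfN hf0 (fun i hi => absurd i.isLt (by omega))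
  -- Step 2: all basis vectors below p-1
  have dlow : ∀ i : Fin p, (i : ℕ) ≤ p - 2 → (Pi.single i 1 : Fin p → k) ∈ N := by
    intro i hi
    have hop := witt_op_single p k lam (i : ℤ) (⟨0, h0p⟩ : Fin p) i (by simp)
    have hmem : vermaOp p k lam (i : ℤ) (Pi.single (⟨0, h0p⟩ : Fin p) 1) ∈ N :=
      hN (i : ℤ) (by omega) (by omega) _ d0
    rw [hop] at hmem
    have hcne : (((i : ℤ) + 1 + ((i : ℤ) + 1) * lam : ℤ) : k) ≠ 0 := by
      have hfac : ((i : ℤ) + 1 + ((i : ℤ) + 1) * lam) = ((i : ℤ) + 1) * (1 + lam) := by ring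
      rw [hfac, Ne, CharP.intCast_eq_zero_iff k p]
      intro hdvd
      rcases hPrimeZ.dvd_mul.mp hdvd with h | h
      · exact witt_not_dvd (by omega) (by omega) h
      · exact witt_not_dvd (by omega) (by omega) h
    have hsm := N.smul_mem ((((i : ℤ) + 1 + ((i : ℤ) + 1) * lam : ℤ) : k))⁻¹ hmem
    rwa [inv_smul_smul₀ hcne] at hsm
  -- Step 3: the top basis vector
  have dtop : (Pi.single (⟨p - 1, by omega⟩ : Fin p) 1 : Fin p → k) ∈ N := by
    have hop := witt_op_single p k lam 1 (⟨p - 2, by omega⟩ : Fin p)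
        (⟨p - 1, by omega⟩ : Fin p) (by simp only [Fin.val_mk]; omega)
    have hmem : vermaOp p k lam 1 (Pi.single (⟨p - 2, by omega⟩ : Fin p) 1) ∈ N :=
      hN 1 (by omega) (by omega) _ (dlow _ (by simp))
    rw [hop] at hmem
    have hcval : ((((⟨p - 1, by omega⟩ : Fin p) : ℤ) + 1 + (1 + 1) * lam : ℤ) : k)
        = ((2 * lam : ℤ) : k) := by
      have h1 : (((⟨p - 1, by omega⟩ : Fin p) : ℤ) + 1 + (1 + 1) * lam : ℤ)
          = (p : ℤ) + 2 * lam := by simp only [Fin.val_mk]; push_cast; omega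
      rw [h1]
      push_cast
      simp [CharP.cast_eq_zero k p]
    rw [hcval] at hmem
    have hcne : ((2 * lam : ℤ) : k) ≠ 0 := by
      rw [Ne, CharP.intCast_eq_zero_iff k p]
      intro hdvd
      rcases hPrimeZ.dvd_mul.mp hdvd with h | h
      · exact witt_not_dvd (by omega) (by omega) h
      · exact witt_not_dvd (by omega) (by omega) h
    have hsm := N.smul_mem (((2 * lam : ℤ) : k))⁻¹ hmem
    rwa [inv_smul_smul₀ hcne] at hsm
  have dall : ∀ i : Fin p, (Pi.single i 1 : Fin p → k) ∈ N := by
    intro i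
    by_cases hi : (i : ℕ) ≤ p - 2
    · exact dlow i hi
    · have : i = ⟨p - 1, by omega⟩ := by
        ext; simp; have := i.isLt; omega
      rw [this]; exact dtop
  rw [eq_top_iff]
  intro v _
  have hv : v = ∑ i : Fin p, v i • (Pi.single i 1 : Fin p → k) := by
    funext m
    rw [Finset.sum_apply]
    simp [Pi.single_apply, Finset.sum_ite_eq]
  rw [hv]
  exact Submodule.sum_mem N (fun i _ => N.smul_mem _ (dall i))
end

section
/- The module Z(0) (with action e_k·m_j = (j+k+1)m_{j+k}) has the span of m_0,...,m_{p-2} as a W(1)-submodule of codimension 1 (equivalently, Z(0) has a trivial one-dimensional quotient), and Z(p-1) contains a one-dimensional trivial submodule. -/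
/-- the span of `m_0, …, m_{p-2}` (i.e. the functions vanishing at the
last index) is a `W(1)`-submodule of `Z(0)` of codimension 1, so `Z(0)` has a trivial
one-dimensional quotient; and `Z(p-1)` contains a one-dimensional trivial submodule
(a nonzero vector killed by all `e_κ`). -/
theorem verma_zero_and_top (p : ℕ) (k : Type) [Field k] [IsAlgClosed k] [CharP k p]
    (hp : p.Prime) (hp3 : 3 < p) :
    (∀ κ : ℤ, -1 ≤ κ → κ ≤ (p : ℤ) - 2 →
      ∀ f ∈ LinearMap.ker (LinearMap.proj (R := k) (φ := fun _ : Fin p => k) (⟨p - 1, by omega⟩ : Fin p)),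
        vermaOp p k 0 κ f ∈
          LinearMap.ker (LinearMap.proj (R := k) (φ := fun _ : Fin p => k) (⟨p - 1, by omega⟩ : Fin p))) ∧
    Module.finrank k
      ↥(LinearMap.ker (LinearMap.proj (R := k) (φ := fun _ : Fin p => k) (⟨p - 1, by omega⟩ : Fin p))) = p - 1 ∧
    (∃ f : Fin p → k, f ≠ 0 ∧
      ∀ κ : ℤ, -1 ≤ κ → κ ≤ (p : ℤ) - 2 → vermaOp p k ((p : ℤ) - 1) κ f = 0) := by
  have hp0 : 0 < p := by omega
  refine ⟨?_, ?_, ?_⟩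
  · intro κ h1 h2 f hf
    simp only [LinearMap.mem_ker, LinearMap.proj_apply] at hf ⊢
    show (if h : _ then _ else _) = (0 : k)
    split
    · have : ((((⟨p - 1, by omega⟩ : Fin p) : ℕ) : ℤ) + 1 + (κ + 1) * 0) = (p : ℤ) := by
        simp; omega
      rw [this]
      simp [zsmul_eq_mul]
    · rfl
  · have h1 : Function.Surjective (LinearMap.proj (R := k) (φ := fun _ : Fin p => k)
        (⟨p - 1, by omega⟩ : Fin p)) := fun c => ⟨fun _ => c, rfl⟩
    have h2 := LinearMap.finrank_range_add_finrank_ker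
      (LinearMap.proj (R := k) (φ := fun _ : Fin p => k) (⟨p - 1, by omega⟩ : Fin p))
    rw [LinearMap.range_eq_top.mpr h1, finrank_top] at h2
    simp [Module.finrank_pi] at h2
    omega
  · refine ⟨Pi.single (⟨0, hp0⟩ : Fin p) 1, ?_, ?_⟩
    · intro h
      have := congrFun h (⟨0, hp0⟩ : Fin p)
      simp [Pi.single_apply] at this
    · intro κ h1 h2
      funext n
      show (if h : _ then _ else _) = (0 : k)
      split
      case isTrue h =>
        rcases h with ⟨ha, hb⟩
        by_cases hn : (⟨((n : ℤ) - κ).toNat, by omega⟩ : Fin p) = ⟨0, hp0⟩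
        · have hnκ : (n : ℤ) = κ := by
            simp [Fin.ext_iff] at hn
            omega
          have hc : ((n : ℤ) + 1 + (κ + 1) * ((p : ℤ) - 1)) = (κ + 1) * p := by
            rw [hnκ]; ring
          rw [hc]
          simp [zsmul_eq_mul]
        · rw [Pi.single_eq_of_ne hn, smul_zero]
      case isFalse => rfl
end

section
/- Let A_{(2)} = k[X_1,X_2]/(X_1^p, X_2^p) with the W(1)-action e_j · f = x_1^{j+1} ∂f/∂x_1 + x_2^{j+1} ∂f/∂x_2, graded by total degree: A_{(2)} = ⊕_{i=0}^{2(p-1)} A_i where A_i is spanned by monomials x_1^{a}x_2^{b} with a + b = i. Then for s ∈ {1,2}, the operator e_s : A_n → A_{n+s} is injective whenever n > 0 and n + s < p. -/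
set_option synthInstance.maxHeartbeats 1000000
set_option maxHeartbeats 1000000

/-- The action of the Witt-algebra basis element `e_j = x^{j+1}∂` on
`A(1) = k[X]/(X^p)`, in coordinates w.r.t. the monomial basis `x^0, …, x^{p-1}`:
`e_j · x^a = a·x^{a+j}` (terms with exponent out of range `[0, p-1]` vanish). -/
noncomputable def wittOp1 (p : ℕ) (k : Type) [Field k] (j : ℤ) :
    (Fin p → k) →ₗ[k] (Fin p → k) :=
  Matrix.toLin' (Matrix.of fun m r : Fin p =>
    if (r : ℤ) = (m : ℤ) - j then (((m : ℤ) - j : ℤ) : k) else 0)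

/-- The action of the Witt-algebra basis element `e_j` on
`A_{(2)} = k[X₁,X₂]/(X₁^p, X₂^p)`, in coordinates w.r.t. the monomial basis
`x₁^a x₂^b`: `e_j · f = x₁^{j+1} ∂f/∂x₁ + x₂^{j+1} ∂f/∂x₂`, i.e.
`e_j · (x₁^a x₂^b) = a·x₁^{a+j}x₂^b + b·x₁^a x₂^{b+j}` (out-of-range terms vanish). -/
noncomputable def wittOp2 (p : ℕ) (k : Type) [Field k] (j : ℤ) :
    (Fin p × Fin p → k) →ₗ[k] (Fin p × Fin p → k) :=
  Matrix.toLin' (Matrix.of fun q r : Fin p × Fin p =>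
    (if (r.1 : ℤ) = (q.1 : ℤ) - j ∧ r.2 = q.2 then (((q.1 : ℤ) - j : ℤ) : k) else 0) +
    (if r.1 = q.1 ∧ (r.2 : ℤ) = (q.2 : ℤ) - j then (((q.2 : ℤ) - j : ℤ) : k) else 0))

/-- The degree-`i` graded component `A_i` of `A_{(2)}`: the span of the monomials
`x₁^a x₂^b` with `a + b = i`. -/
def degComp (p : ℕ) (k : Type) [Field k] (i : ℕ) : Submodule k (Fin p × Fin p → k) where
  carrier := {f | ∀ q : Fin p × Fin p, (q.1 : ℕ) + (q.2 : ℕ) ≠ i → f q = 0}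
  add_mem' := by intro f g hf hg q hq; simp [hf q hq, hg q hq]
  zero_mem' := by intro q hq; rfl
  smul_mem' := by intro c f hf q hq; simp [hf q hq]

/-- The symmetric part `A_s` of `A_{(2)} = A(1) ⊗ A(1)`: polynomials invariant under
swapping `x₁` and `x₂`. -/
def symmPart (p : ℕ) (k : Type) [Field k] : Submodule k (Fin p × Fin p → k) where
  carrier := {f | ∀ q : Fin p × Fin p, f (q.2, q.1) = f q}
  add_mem' := by intro f g hf hg q; simp [hf q, hg q]
  zero_mem' := by intro q; rfl
  smul_mem' := by intro c f hf q; simp [hf q]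

/-- The antisymmetric part `A_a` of `A_{(2)} = A(1) ⊗ A(1)`: polynomials negated by
swapping `x₁` and `x₂`. -/
def antisymmPart (p : ℕ) (k : Type) [Field k] : Submodule k (Fin p × Fin p → k) where
  carrier := {f | ∀ q : Fin p × Fin p, f (q.2, q.1) = - f q}
  add_mem' := by intro f g hf hg q; simp only [Set.mem_setOf_eq] at *;
                 simp [hf q, hg q]; ring
  zero_mem' := by intro q; simp
  smul_mem' := by intro c f hf q; simp only [Set.mem_setOf_eq] at *; simp [hf q]

/-- The monomial `x₁^a x₂^b` of `A_{(2)}` (for `a, b ≤ p-1`), as a coordinate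
function. -/
def mono (p : ℕ) (k : Type) [Field k] (a b : ℕ) : Fin p × Fin p → k :=
  fun q => if (q.1 : ℕ) = a ∧ (q.2 : ℕ) = b then 1 else 0

/-- The submodule `A_s' = span{x₁^i + x₂^i : 0 ≤ i ≤ p-1}` of `A_{(2)}`. -/
noncomputable def symmPrime (p : ℕ) (k : Type) [Field k] : Submodule k (Fin p × Fin p → k) :=
  Submodule.span k (Set.range fun i : Fin p => mono p k i 0 + mono p k 0 i)

/-- The submodule `A_a' = span{x₁^i − x₂^i : 1 ≤ i ≤ p-1}` of `A_{(2)}`. -/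
noncomputable def antisymmPrime (p : ℕ) (k : Type) [Field k] : Submodule k (Fin p × Fin p → k) :=
  Submodule.span k {g | ∃ i : Fin p, (i : ℕ) ≠ 0 ∧ g = mono p k i 0 - mono p k 0 i}

lemma fin_sub_lt {p t : ℕ} (q : Fin p) : (q : ℕ) - t < p :=
  lt_of_le_of_lt (Nat.sub_le _ _) q.isLt

lemma wittOp2_apply_nat (p : ℕ) (k : Type) [Field k] (t : ℕ) (ht : 0 < t)
    (f : Fin p × Fin p → k) (q : Fin p × Fin p) :
    wittOp2 p k (t : ℤ) f q =
      (if t ≤ (q.1 : ℕ) then (((q.1 : ℕ) - t : ℕ) : k) *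
          f (⟨(q.1 : ℕ) - t, fin_sub_lt q.1⟩, q.2) else 0) +
      (if t ≤ (q.2 : ℕ) then (((q.2 : ℕ) - t : ℕ) : k) *
          f (q.1, ⟨(q.2 : ℕ) - t, fin_sub_lt q.2⟩) else 0) := by
  have hrw : wittOp2 p k (t : ℤ) f q = ∑ r : Fin p × Fin p,
      (((if (r.1 : ℤ) = (q.1 : ℤ) - t ∧ r.2 = q.2 then (((q.1 : ℤ) - t : ℤ) : k) else 0) +
       (if r.1 = q.1 ∧ (r.2 : ℤ) = (q.2 : ℤ) - t then (((q.2 : ℤ) - t : ℤ) : k) else 0)) * f r) := by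
    simp [wittOp2, Matrix.toLin'_apply, Matrix.mulVec, dotProduct]
  rw [hrw, Finset.sum_congr rfl (fun r _ => add_mul _ _ _), Finset.sum_add_distrib]
  congr 1
  · by_cases h : t ≤ (q.1 : ℕ)
    · rw [if_pos h,
        Finset.sum_eq_single ((⟨⟨(q.1 : ℕ) - t, fin_sub_lt q.1⟩, q.2⟩ : Fin p × Fin p))]
      · rw [if_pos]
        · congr 1
          have hc : (q.1 : ℤ) - t = (((q.1 : ℕ) - t : ℕ) : ℤ) := by omega
          rw [hc, Int.cast_natCast]
        · constructor
          · simp only [Fin.val_mk]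
            omega
          · rfl
      · intro r _ hr
        rw [if_neg, zero_mul]
        rintro ⟨h1, h2⟩
        apply hr
        ext
        · show (r.1 : ℕ) = (q.1 : ℕ) - t
          omega
        · exact congrArg Fin.val h2
      · intro h; exact absurd (Finset.mem_univ _) h
    · rw [if_neg h]
      apply Finset.sum_eq_zero
      intro r _
      rw [if_neg, zero_mul]
      rintro ⟨h1, _⟩
      omega
  · by_cases h : t ≤ (q.2 : ℕ)
    · rw [if_pos h,
        Finset.sum_eq_single ((⟨q.1, ⟨(q.2 : ℕ) - t, fin_sub_lt q.2⟩⟩ : Fin p × Fin p))]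
      · rw [if_pos]
        · congr 1
          have hc : (q.2 : ℤ) - t = (((q.2 : ℕ) - t : ℕ) : ℤ) := by omega
          rw [hc, Int.cast_natCast]
        · constructor
          · rfl
          · simp only [Fin.val_mk]
            omega
      · intro r _ hr
        rw [if_neg, zero_mul]
        rintro ⟨h1, h2⟩
        apply hr
        ext
        · exact congrArg Fin.val h1
        · show (r.2 : ℕ) = (q.2 : ℕ) - t
          omega
      · intro h; exact absurd (Finset.mem_univ _) h
    · rw [if_neg h]
      apply Finset.sum_eq_zero
      intro r _
      rw [if_neg, zero_mul]
      rintro ⟨_, h2⟩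
      omega

/-- for `s ∈ {1,2}`, the operator `e_s : A_n → A_{n+s}` on
`A_{(2)} = k[X₁,X₂]/(X₁^p,X₂^p)` (graded by total degree) is injective whenever
`n > 0` and `n + s < p`. -/
theorem wittOp2_injective_on_degComp (p : ℕ) (k : Type) [Field k] [IsAlgClosed k] [CharP k p]
    (hp : p.Prime) (hp3 : 3 < p) (s : ℤ) (hs : s = 1 ∨ s = 2) (n : ℕ) (hn : 0 < n)
    (hns : (n : ℤ) + s < p) :
    ∀ f ∈ degComp p k n,
      wittOp2 p k s f ∈ degComp p k (n + s.toNat) ∧ (wittOp2 p k s f = 0 → f = 0) := by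
  obtain ⟨t, ht1, hst⟩ : ∃ t : ℕ, 0 < t ∧ s = (t : ℤ) := by
    rcases hs with h | h
    · exact ⟨1, by omega, by rw [h]; rfl⟩
    · exact ⟨2, by omega, by rw [h]; rfl⟩
  subst hst
  rw [Int.toNat_natCast]
  have hnp : n + t < p := by exact_mod_cast hns
  have hcast : ∀ m : ℕ, 0 < m → m < p → ((m : k) ≠ 0) := by
    intro m hm1 hm2 hc
    rw [CharP.cast_eq_zero_iff k p m] at hc
    exact absurd (Nat.le_of_dvd hm1 hc) (by omega)
  intro f hf
  constructor
  · intro q hq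
    rw [wittOp2_apply_nat p k t ht1 f q]
    have e1 : (if t ≤ (q.1 : ℕ) then (((q.1 : ℕ) - t : ℕ) : k) *
        f (⟨(q.1 : ℕ) - t, fin_sub_lt q.1⟩, q.2) else 0) = 0 := by
      split
      · rw [hf _ ?_, mul_zero]
        simp only [Fin.val_mk]
        omega
      · rfl
    have e2 : (if t ≤ (q.2 : ℕ) then (((q.2 : ℕ) - t : ℕ) : k) *
        f (q.1, ⟨(q.2 : ℕ) - t, fin_sub_lt q.2⟩) else 0) = 0 := by
      split
      · rw [hf _ ?_, mul_zero]
        simp only [Fin.val_mk]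
        omega
      · rfl
    rw [e1, e2, add_zero]
  · intro h0
    have key : ∀ d : ℕ, ∀ q : Fin p × Fin p, (q.1 : ℕ) + (q.2 : ℕ) = n →
        n - (q.1 : ℕ) = d → f q = 0 := by
      intro d
      induction d using Nat.strong_induction_on with
      | _ d ih =>
        intro q hdeg hd
        by_cases ha : (q.1 : ℕ) = 0
        · -- bottom equation at (q.1, n + t)
          have heq := congrFun h0 (q.1, (⟨n + t, hnp⟩ : Fin p))
          rw [wittOp2_apply_nat p k t ht1 f _] at heq
          simp only [Pi.zero_apply, Fin.val_mk] at heq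
          rw [if_neg (by omega), if_pos (by omega), zero_add] at heq
          have hq2 : (⟨n + t - t, by omega⟩ : Fin p) = q.2 := by
            apply Fin.ext
            simp only [Fin.val_mk]
            omega
          rw [hq2] at heq
          have : ((n + t - t : ℕ) : k) ≠ 0 := by
            have : n + t - t = n := by omega
            rw [this]
            exact hcast n hn (by omega)
          exact (mul_eq_zero.mp heq).resolve_left this
        · -- equation at (a + t, q.2)
          have halt : (q.1 : ℕ) + t < p := by omega
          have heq := congrFun h0 ((⟨(q.1 : ℕ) + t, halt⟩ : Fin p), q.2)
          rw [wittOp2_apply_nat p k t ht1 f _] at heq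
          simp only [Pi.zero_apply, Fin.val_mk] at heq
          rw [if_pos (by omega)] at heq
          have hq1 : (⟨(q.1 : ℕ) + t - t, by omega⟩ : Fin p) = q.1 := by
            apply Fin.ext; simp only [Fin.val_mk]; omega
          rw [hq1] at heq
          have e2 : (if t ≤ (q.2 : ℕ) then (((q.2 : ℕ) - t : ℕ) : k) *
              f (⟨(q.1 : ℕ) + t, halt⟩, ⟨(q.2 : ℕ) - t, fin_sub_lt q.2⟩) else 0) = 0 := by
            split
            · rename_i hb
              rw [ih (n - ((q.1 : ℕ) + t)) (by omega) _ (by simp only [Fin.val_mk]; omega)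
                  (by simp only [Fin.val_mk]), mul_zero]
            · rfl
          rw [e2, add_zero] at heq
          have hc : (((q.1 : ℕ) + t - t : ℕ) : k) ≠ 0 := by
            have : (q.1 : ℕ) + t - t = (q.1 : ℕ) := by omega
            rw [this]
            exact hcast _ (by omega) q.1.isLt
          exact (mul_eq_zero.mp heq).resolve_left hc
    funext q
    by_cases hdq : (q.1 : ℕ) + (q.2 : ℕ) = n
    · exact key (n - q.1) q hdq rfl
    · exact hf q hdq
end

section
/- Let A_s^+ denote the symmetric part of (A(1)/k) ⊗ (A(1)/k), graded by total degree with components (A_s^+)_i for 2 ≤ i ≤ 2p−2. Then dim_k((A_s^+)_i ∩ ker e_{-1}) = 1 if i ∈ {2, 4, ..., p−1} (i even, i ≤ p−1), and = 0 if i ∈ {3, 5, ..., p} (i odd, i ≤ p). -/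
set_option synthInstance.maxHeartbeats 1000000
set_option maxHeartbeats 1000000

lemma wittOp2_apply (p : ℕ) (k : Type) [Field k] (f : Fin p × Fin p → k) (q : Fin p × Fin p) :
    wittOp2 p k (-1) f q =
      (if h : (q.1 : ℕ) + 1 < p then (((q.1 : ℕ) + 1 : ℕ) : k) * f (⟨(q.1 : ℕ) + 1, h⟩, q.2) else 0) +
      (if h : (q.2 : ℕ) + 1 < p then (((q.2 : ℕ) + 1 : ℕ) : k) * f (q.1, ⟨(q.2 : ℕ) + 1, h⟩) else 0) := by
  rw [wittOp2, Matrix.toLin'_apply]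
  show ∑ r : Fin p × Fin p, _ * f r = _
  rw [Finset.sum_congr rfl (g := fun r => (if (r.1 : ℤ) = (q.1 : ℤ) + 1 ∧ r.2 = q.2 then (((q.1:ℕ):k) + 1) * f r else 0) + (if r.1 = q.1 ∧ (r.2 : ℤ) = (q.2 : ℤ) + 1 then (((q.2:ℕ):k) + 1) * f r else 0))]
  · rw [Finset.sum_add_distrib]
    congr 1
    · by_cases h : (q.1 : ℕ) + 1 < p
      · rw [Finset.sum_eq_single ((⟨(q.1:ℕ)+1, h⟩ : Fin p), q.2)
            (fun r _ hr => if_neg (fun ⟨h1, h2⟩ => hr (Prod.ext (Fin.ext (by exact_mod_cast h1)) h2)))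
            (fun hr => absurd (Finset.mem_univ _) hr), dif_pos h, if_pos ⟨by simp, rfl⟩]
        push_cast; ring
      · rw [dif_neg h, Finset.sum_eq_zero]
        intro r _
        rw [if_neg]
        rintro ⟨h1, -⟩
        have : (r.1 : ℕ) = (q.1:ℕ) + 1 := by exact_mod_cast h1
        exact h (this ▸ r.1.isLt)
    · by_cases h : (q.2 : ℕ) + 1 < p
      · rw [Finset.sum_eq_single (q.1, (⟨(q.2:ℕ)+1, h⟩ : Fin p))
            (fun r _ hr => if_neg (fun ⟨h1, h2⟩ => hr (Prod.ext h1 (Fin.ext (by exact_mod_cast h2)))))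
            (fun hr => absurd (Finset.mem_univ _) hr), dif_pos h, if_pos ⟨rfl, by simp⟩]
        push_cast; ring
      · rw [dif_neg h, Finset.sum_eq_zero]
        intro r _
        rw [if_neg]
        rintro ⟨-, h2⟩
        have : (r.2 : ℕ) = (q.2:ℕ) + 1 := by exact_mod_cast h2
        exact h (this ▸ r.2.isLt)
  · intro r _
    rw [Matrix.of_apply, add_mul]
    congr 1
    · split_ifs with h1 h2 h2
      · push_cast; ring
      · exact absurd ⟨by push_cast at h1 ⊢; omega, h1.2⟩ h2
      · exact absurd ⟨by push_cast at h2 ⊢; omega, h2.2⟩ h1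
      · simp
    · split_ifs with h1 h2 h2
      · push_cast; ring
      · exact absurd ⟨h1.1, by push_cast at h1 ⊢; omega⟩ h2
      · exact absurd ⟨h2.1, by push_cast at h2 ⊢; omega⟩ h1
      · simp

lemma mem_symmPrime_iff (p : ℕ) (k : Type) [Field k] (hp2 : (2:k) ≠ 0) (f : Fin p × Fin p → k) :
    f ∈ symmPrime p k ↔
      (∀ q : Fin p × Fin p, (q.1 : ℕ) ≠ 0 → (q.2 : ℕ) ≠ 0 → f q = 0) ∧
      (∀ q : Fin p × Fin p, f (q.2, q.1) = f q) := by
  constructor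
  · intro hf
    induction hf using Submodule.span_induction with
    | mem x hx =>
      obtain ⟨i, rfl⟩ := hx
      constructor
      · intro q h1 h2
        simp only [mono, Pi.add_apply]
        rw [if_neg (fun h => h2 h.2), if_neg (fun h => h1 h.1), add_zero]
      · intro q
        simp only [mono, Pi.add_apply]
        rw [add_comm]
        exact congrArg₂ (· + ·) (if_congr and_comm rfl rfl) (if_congr and_comm rfl rfl)
    | zero => exact ⟨fun _ _ _ => rfl, fun _ => rfl⟩
    | add x y _ _ hx hy =>
      exact ⟨fun q h1 h2 => by simp [hx.1 q h1 h2, hy.1 q h1 h2],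
             fun q => by simp [hx.2 q, hy.2 q]⟩
    | smul c x _ hx =>
      exact ⟨fun q h1 h2 => by simp [hx.1 q h1 h2], fun q => by simp [hx.2 q]⟩
  · rintro ⟨h1, h2⟩
    have key : f = ∑ a : Fin p,
        (if (a : ℕ) = 0 then f (a, a) / 2 else f (a, ⟨0, a.pos⟩)) • (mono p k a 0 + mono p k 0 a) := by
      funext q
      simp only [Finset.sum_apply, Pi.smul_apply, Pi.add_apply, mono, smul_eq_mul]
      set C : Fin p → k := fun a =>
        if (a : ℕ) = 0 then f (a, a) / 2 else f (a, ⟨0, a.pos⟩) with hC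
      by_cases hq1 : (q.1 : ℕ) = 0 <;> by_cases hq2 : (q.2 : ℕ) = 0
      · have e1 : q.2 = q.1 := Fin.ext (by omega)
        rw [Finset.sum_congr rfl (fun b _ => show C b * _ = if b = q.1 then C b * 2 else 0 from by
          rcases eq_or_ne b q.1 with rfl | hb
          · rw [if_pos ⟨rfl, hq2⟩, if_pos ⟨hq1, congrArg Fin.val e1⟩, if_pos rfl]; norm_num
          · rw [if_neg (fun h => hb (Fin.ext h.1.symm)),
              if_neg (fun h => hb (Fin.ext (h.2.symm.trans (congrArg Fin.val e1)))),
              if_neg hb]; ring),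
          Finset.sum_ite_eq' Finset.univ q.1 (fun b => C b * 2), if_pos (Finset.mem_univ _)]
        rw [hC]
        simp only [if_pos hq1]
        have : q = (q.1, q.1) := Prod.ext rfl e1
        rw [this, div_mul_cancel₀ _ hp2]
      · rw [Finset.sum_congr rfl (fun b _ => show C b * _ = if b = q.2 then C b else 0 from by
          rcases eq_or_ne b q.2 with rfl | hb
          · rw [if_neg (fun h => hq2 h.2), if_pos ⟨hq1, rfl⟩, if_pos rfl]; ring
          · rw [if_neg (fun h => hq2 h.2), if_neg (fun h => hb (Fin.ext h.2.symm)),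
              if_neg hb]; ring),
          Finset.sum_ite_eq' Finset.univ q.2 C, if_pos (Finset.mem_univ _)]
        rw [hC]
        simp only [if_neg hq2]
        rw [show ((⟨0, q.2.pos⟩ : Fin p)) = q.1 from Fin.ext hq1.symm]
        rw [show f (q.2, q.1) = f q from h2 (q.1, q.2)]
      · rw [Finset.sum_congr rfl (fun b _ => show C b * _ = if b = q.1 then C b else 0 from by
          rcases eq_or_ne b q.1 with rfl | hb
          · rw [if_pos ⟨rfl, hq2⟩, if_neg (fun h => hq1 h.1), if_pos rfl]; ring
          · rw [if_neg (fun h => hb (Fin.ext h.1.symm)), if_neg (fun h => hq1 h.1),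
              if_neg hb]; ring),
          Finset.sum_ite_eq' Finset.univ q.1 C, if_pos (Finset.mem_univ _)]
        rw [hC]
        simp only [if_neg hq1]
        have : q = (q.1, q.2) := rfl
        conv_lhs => rw [this]
        congr 1
        exact Prod.ext rfl (Fin.ext hq2.symm).symm
      · rw [Finset.sum_eq_zero (fun b _ => show C b *
            ((if (q.1:ℕ) = (b:ℕ) ∧ (q.2:ℕ) = 0 then (1:k) else 0) +
             (if (q.1:ℕ) = 0 ∧ (q.2:ℕ) = (b:ℕ) then (1:k) else 0)) = 0 from by
          rw [if_neg (fun h => hq2 h.2), if_neg (fun h => hq1 h.1)]; ring),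
          h1 q hq1 hq2]
    rw [key]
    exact Submodule.sum_mem _ fun a _ =>
      Submodule.smul_mem _ _ (Submodule.subset_span ⟨a, rfl⟩)


lemma cast_ne_zero_of_lt_char (p : ℕ) (k : Type) [Field k] [CharP k p] (n : ℕ)
    (h0 : n ≠ 0) (h : n < p) : (n : k) ≠ 0 := by
  intro hc
  rw [CharP.cast_eq_zero_iff k p] at hc
  have := Nat.le_of_dvd (Nat.pos_of_ne_zero h0) hc
  omega

/-- The lowest-weight vector in degree `i`: coefficients `(-1)^a C(i,a)`. -/
noncomputable def wvec (p : ℕ) (k : Type) [Field k] (i : ℕ) : Fin p × Fin p → k :=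
  fun q => if (q.1 : ℕ) + (q.2 : ℕ) = i then (-1 : k) ^ (q.1 : ℕ) * (i.choose (q.1 : ℕ) : k) else 0

lemma choose_cast_identity (k : Type) [Field k] (i a : ℕ) :
    ((i.choose (a+1) : ℕ) : k) * ((a+1 : ℕ) : k) = ((i.choose a : ℕ) : k) * ((i - a : ℕ) : k) := by
  rw [← Nat.cast_mul, ← Nat.cast_mul, Nat.choose_succ_right_eq]

lemma wvec_symm (p : ℕ) (k : Type) [Field k] (i : ℕ) (hE : Even i) :
    wvec p k i ∈ symmPart p k := by
  intro q
  simp only [wvec]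
  by_cases h : (q.1 : ℕ) + (q.2 : ℕ) = i
  · rw [if_pos (by omega), if_pos h]
    have hb : (q.2 : ℕ) = i - (q.1 : ℕ) := by omega
    have hc : i.choose (q.2 : ℕ) = i.choose (q.1 : ℕ) := by
      rw [hb, Nat.choose_symm (by omega)]
    rw [hc]
    congr 1
    rcases Nat.even_or_odd (q.1 : ℕ) with he | ho
    · have : Even (q.2 : ℕ) := by rw [Nat.even_iff] at *; omega
      rw [he.neg_one_pow, this.neg_one_pow]
    · have : Odd (q.2 : ℕ) := by rw [Nat.odd_iff] at *; rw [Nat.even_iff] at hE; omega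
      rw [ho.neg_one_pow, this.neg_one_pow]
  · rw [if_neg (by omega), if_neg h]

lemma wvec_degComp (p : ℕ) (k : Type) [Field k] (i : ℕ) : wvec p k i ∈ degComp p k i := by
  intro q hq
  exact if_neg hq

lemma wvec_e_zero (p : ℕ) (k : Type) [Field k] (i : ℕ) (h2 : 2 ≤ i) (hip : i < p) :
    wittOp2 p k (-1) (wvec p k i) = 0 := by
  funext q
  rw [wittOp2_apply, Pi.zero_apply]
  by_cases h : (q.1 : ℕ) + (q.2 : ℕ) = i - 1
  · have h1 : (q.1 : ℕ) + 1 < p := by omega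
    have h2' : (q.2 : ℕ) + 1 < p := by omega
    rw [dif_pos h1, dif_pos h2']
    show _ * wvec p k i (⟨(q.1:ℕ)+1, h1⟩, q.2) + _ * wvec p k i (q.1, ⟨(q.2:ℕ)+1, h2'⟩) = 0
    simp only [wvec]
    rw [if_pos (by simpa using by omega), if_pos (by simpa using by omega)]
    have e1 : ((q.2 : ℕ) + 1 : ℕ) = (i - (q.1 : ℕ) : ℕ) := by omega
    have key := choose_cast_identity k i (q.1 : ℕ)
    push_cast [pow_succ] at key ⊢
    rw [show ((q.2:ℕ):k) + 1 = ((i - (q.1:ℕ) : ℕ) : k) from by rw [← e1]; push_cast; ring]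
    linear_combination (-(-1:k)^(q.1:ℕ)) * key
  · have z1 : (if h1 : (q.1:ℕ)+1 < p then ((((q.1:ℕ)+1:ℕ)):k) * wvec p k i (⟨(q.1:ℕ)+1, h1⟩, q.2) else 0) = 0 := by
      split_ifs with h1
      · rw [show wvec p k i (⟨(q.1:ℕ)+1, h1⟩, q.2) = 0 from
          if_neg (show ¬((q.1:ℕ)+1 + (q.2:ℕ) = i) from by omega), mul_zero]
      · rfl
    have z2 : (if h1 : (q.2:ℕ)+1 < p then ((((q.2:ℕ)+1:ℕ)):k) * wvec p k i (q.1, ⟨(q.2:ℕ)+1, h1⟩) else 0) = 0 := by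
      split_ifs with h1
      · rw [show wvec p k i (q.1, ⟨(q.2:ℕ)+1, h1⟩) = 0 from
          if_neg (show ¬((q.1:ℕ) + ((q.2:ℕ)+1) = i) from by omega), mul_zero]
      · rfl
    rw [z1, z2, add_zero]

lemma wvec_not_mem (p : ℕ) (k : Type) [Field k] [CharP k p] (i : ℕ) (h2 : 2 ≤ i) (hip : i < p) :
    wvec p k i ∉ symmPrime p k := by
  intro hmem
  have h2k : (2 : k) ≠ 0 := cast_ne_zero_of_lt_char p k 2 (by norm_num) (by omega)
  have := ((mem_symmPrime_iff p k h2k _).1 hmem).1 (⟨1, by omega⟩, ⟨i - 1, by omega⟩)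
    (by simp) (by simp; omega)
  rw [wvec, if_pos (by simp; omega)] at this
  simp only [Nat.choose_one_right] at this
  exact cast_ne_zero_of_lt_char p k i (by omega) hip (by linear_combination -this)


lemma key_coeff (p : ℕ) (k : Type) [Field k] [CharP k p] (i : ℕ) (h2 : 2 ≤ i) (hip : i < p)
    (g : Fin p × Fin p → k) (hgd : g ∈ degComp p k i)
    (hint : ∀ q : Fin p × Fin p, (q.1 : ℕ) ≠ 0 → (q.2 : ℕ) ≠ 0 → wittOp2 p k (-1) g q = 0) :
    ∀ q : Fin p × Fin p, 1 ≤ (q.1 : ℕ) → (q.1 : ℕ) ≤ i - 1 → (q.1 : ℕ) + (q.2 : ℕ) = i →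
      g q = (-(g (⟨1, by omega⟩, ⟨i - 1, by omega⟩) * (i : k)⁻¹)) * (-1 : k) ^ (q.1 : ℕ) *
        (i.choose (q.1 : ℕ) : k) := by
  have hc : ∀ (a : ℕ) (h : a ≤ i), ∃ v : k,
      v = g (⟨a, by omega⟩, ⟨i - a, by omega⟩) := fun a h => ⟨_, rfl⟩
  set c : ℕ → k := fun a => if h : a ≤ i then g (⟨a, by omega⟩, ⟨i - a, by omega⟩) else 0 with hcdef
  have hc1 : c 1 = g (⟨1, by omega⟩, ⟨i - 1, by omega⟩) := dif_pos (by omega)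
  set t : k := -(c 1 * (i : k)⁻¹) with htdef
  have crec : ∀ a, 1 ≤ a → a + 1 ≤ i - 1 →
      ((a + 1 : ℕ) : k) * c (a + 1) = -(((i - a : ℕ)) : k) * c a := by
    intro a ha hai
    have hq := hint (⟨a, by omega⟩, ⟨i - 1 - a, by omega⟩)
      (by show a ≠ 0; omega) (by show i - 1 - a ≠ 0; omega)
    rw [wittOp2_apply] at hq
    simp only [] at hq
    rw [dif_pos (show (((⟨a, by omega⟩ : Fin p) : ℕ)) + 1 < p by show a + 1 < p; omega),
        dif_pos (show (((⟨i - 1 - a, by omega⟩ : Fin p) : ℕ)) + 1 < p by show i - 1 - a + 1 < p; omega)] at hq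
    have e2 : c (a + 1) = g (⟨a + 1, by omega⟩, ⟨i - 1 - a, by omega⟩) := by
      rw [hcdef]
      simp only []
      rw [dif_pos (show a + 1 ≤ i by omega)]
      exact congrArg g (Prod.ext rfl (Fin.ext (by show i - (a+1) = i - 1 - a; omega)))
    have e3 : c a = g (⟨a, by omega⟩, ⟨i - 1 - a + 1, by omega⟩) := by
      rw [hcdef]
      simp only []
      rw [dif_pos (show a ≤ i by omega)]
      exact congrArg g (Prod.ext rfl (Fin.ext (by show i - a = i - 1 - a + 1; omega)))
    have e4 : ((i - 1 - a + 1 : ℕ) : k) = ((i - a : ℕ) : k) := by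
      congr 1; omega
    rw [e2, e3, ← e4]
    linear_combination hq
  have main : ∀ a, 1 ≤ a → a ≤ i - 1 → c a = t * (-1 : k) ^ a * (i.choose a : k) := by
    intro a ha
    induction a, ha using Nat.le_induction with
    | base =>
      intro _
      have hi : ((i : ℕ) : k) ≠ 0 := cast_ne_zero_of_lt_char p k i (by omega) hip
      rw [htdef, Nat.choose_one_right, pow_one]
      field_simp
    | succ a ha ih =>
      intro h1
      have hrec := crec a ha (by omega)
      have hca := ih (by omega)
      have hne : ((a + 1 : ℕ) : k) ≠ 0 := cast_ne_zero_of_lt_char p k (a + 1) (by omega) (by omega)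
      apply mul_left_cancel₀ hne
      rw [hrec, hca]
      have key := choose_cast_identity k i a
      push_cast [pow_succ] at key ⊢
      linear_combination (t * (-1 : k) ^ a) * key
  intro q hq1 hq2 hsum
  have e5 : c (q.1 : ℕ) = g q := by
    rw [hcdef]
    simp only []
    rw [dif_pos (show (q.1 : ℕ) ≤ i by omega)]
    exact congrArg g (Prod.ext (Fin.ext rfl) (Fin.ext (by show i - (q.1:ℕ) = (q.2:ℕ); omega)))
  rw [← e5, main (q.1 : ℕ) hq1 hq2, htdef, hc1]

lemma key_p (p : ℕ) (k : Type) [Field k] [CharP k p] (hp3 : 3 < p)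
    (g : Fin p × Fin p → k) (hgd : g ∈ degComp p k p) (hgs : g ∈ symmPart p k)
    (hint : ∀ q : Fin p × Fin p, (q.1 : ℕ) ≠ 0 → (q.2 : ℕ) ≠ 0 → wittOp2 p k (-1) g q = 0) :
    g = 0 := by
  set c : ℕ → k := fun a => if h : 1 ≤ a ∧ a ≤ p - 1 then g (⟨a, by omega⟩, ⟨p - a, by omega⟩) else 0
    with hcdef
  have crec : ∀ a, 1 ≤ a → a + 1 ≤ p - 1 →
      ((a + 1 : ℕ) : k) * c (a + 1) = ((a : ℕ) : k) * c a := by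
    intro a ha hai
    have hq := hint (⟨a, by omega⟩, ⟨p - 1 - a, by omega⟩)
      (by show a ≠ 0; omega) (by show p - 1 - a ≠ 0; omega)
    rw [wittOp2_apply] at hq
    simp only [] at hq
    rw [dif_pos (show (((⟨a, by omega⟩ : Fin p) : ℕ)) + 1 < p by show a + 1 < p; omega),
        dif_pos (show (((⟨p - 1 - a, by omega⟩ : Fin p) : ℕ)) + 1 < p by show p - 1 - a + 1 < p; omega)] at hq
    have e2 : c (a + 1) = g (⟨a + 1, by omega⟩, ⟨p - 1 - a, by omega⟩) := by
      rw [hcdef]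
      simp only []
      rw [dif_pos (show 1 ≤ a + 1 ∧ a + 1 ≤ p - 1 by omega)]
      exact congrArg g (Prod.ext rfl (Fin.ext (by show p - (a+1) = p - 1 - a; omega)))
    have e3 : c a = g (⟨a, by omega⟩, ⟨p - 1 - a + 1, by omega⟩) := by
      rw [hcdef]
      simp only []
      rw [dif_pos (show 1 ≤ a ∧ a ≤ p - 1 by omega)]
      exact congrArg g (Prod.ext rfl (Fin.ext (by show p - a = p - 1 - a + 1; omega)))
    have e4 : ((p - 1 - a + 1 : ℕ) : k) = -((a : ℕ) : k) := by
      have : ((p - 1 - a + 1 + a : ℕ) : k) = 0 := by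
        rw [show p - 1 - a + 1 + a = p by omega]
        exact CharP.cast_eq_zero k p
      push_cast at this ⊢
      linear_combination this
    rw [e2, e3]
    rw [e4] at hq
    linear_combination hq
  have main : ∀ a, 1 ≤ a → a ≤ p - 1 → ((a : ℕ) : k) * c a = c 1 := by
    intro a ha
    induction a, ha using Nat.le_induction with
    | base => intro _; rw [Nat.cast_one, one_mul]
    | succ a ha ih =>
      intro h1
      rw [crec a ha (by omega), ih (by omega)]
  have hsym : c (p - 1) = c 1 := by
    have h1 := hgs (⟨1, by omega⟩, ⟨p - 1, by omega⟩)
    have e1 : c (p - 1) = g (⟨p - 1, by omega⟩, ⟨1, by omega⟩) := by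
      rw [hcdef]
      simp only []
      rw [dif_pos (show 1 ≤ p - 1 ∧ p - 1 ≤ p - 1 by omega)]
      exact congrArg g (Prod.ext rfl (Fin.ext (by show p - (p - 1) = 1; omega)))
    have e2 : c 1 = g (⟨1, by omega⟩, ⟨p - 1, by omega⟩) := by
      rw [hcdef]
      simp only []
      rw [dif_pos (show 1 ≤ 1 ∧ 1 ≤ p - 1 by omega)]
    rw [e1, e2, ← h1]
  have hc1 : c 1 = 0 := by
    have hm := main (p - 1) (by omega) (le_refl _)
    have hcast : ((p - 1 : ℕ) : k) = -1 := by
      have : ((p - 1 + 1 : ℕ) : k) = 0 := by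
        rw [show p - 1 + 1 = p by omega]; exact CharP.cast_eq_zero k p
      push_cast at this ⊢
      linear_combination this
    rw [hcast, hsym] at hm
    have h2k : (2 : k) ≠ 0 := cast_ne_zero_of_lt_char p k 2 (by norm_num) (by omega)
    have : (2 : k) * c 1 = 0 := by linear_combination -hm
    exact (mul_eq_zero.1 this).resolve_left h2k
  have hcall : ∀ a, c a = 0 := by
    intro a
    by_cases h : 1 ≤ a ∧ a ≤ p - 1
    · have := main a h.1 h.2
      rw [hc1] at this
      have hne : ((a : ℕ) : k) ≠ 0 := cast_ne_zero_of_lt_char p k a (by omega) (by omega)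
      exact (mul_eq_zero.1 this).resolve_left hne
    · exact dif_neg h
  funext q
  rw [Pi.zero_apply]
  by_cases h : (q.1 : ℕ) + (q.2 : ℕ) = p
  · have h1 : 1 ≤ (q.1 : ℕ) ∧ (q.1 : ℕ) ≤ p - 1 := by
      have := q.1.isLt; have := q.2.isLt; omega
    have e5 : c (q.1 : ℕ) = g q := by
      rw [hcdef]
      simp only []
      rw [dif_pos h1]
      exact congrArg g (Prod.ext (Fin.ext rfl) (Fin.ext (by show p - (q.1:ℕ) = (q.2:ℕ); omega)))
    rw [← e5, hcall]
  · exact hgd q h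

/-- in the symmetric top level `A_s⁺ = A_s/A_s'` (realized as the image
of `A_s` in `A_{(2)}/A_s'`), graded by total degree, the kernel of `e_{-1}` meets the
degree-`i` component in a subspace of dimension `1` for even `i` with `2 ≤ i ≤ p-1`,
and `0` for odd `i` with `3 ≤ i ≤ p`. -/
theorem symm_top_level_lowest_weight_dims (p : ℕ) (k : Type) [Field k] [IsAlgClosed k]
    [CharP k p] (hp : p.Prime) (hp3 : 3 < p)
    (hstab : symmPrime p k ≤ (symmPrime p k).comap (wittOp2 p k (-1))) :
    ∀ i : ℕ, 2 ≤ i → i ≤ p →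
      Module.finrank k
        ↥(Submodule.map (symmPrime p k).mkQ (symmPart p k ⊓ degComp p k i) ⊓
          LinearMap.ker (Submodule.mapQ (symmPrime p k) (symmPrime p k)
            (wittOp2 p k (-1)) hstab)) =
        if Even i then 1 else 0 := by
  intro i h2 hip
  have h2k : (2 : k) ≠ 0 := cast_ne_zero_of_lt_char p k 2 (by norm_num) (by omega)
  have hpodd : ¬ Even p := by
    have := hp.odd_of_ne_two (by omega)
    rw [Nat.odd_iff] at this
    rw [Nat.even_iff]
    omega
  have hker_int : ∀ g : Fin p × Fin p → k,
      (Submodule.mapQ (symmPrime p k) (symmPrime p k) (wittOp2 p k (-1)) hstab)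
        ((symmPrime p k).mkQ g) = 0 →
      ∀ q : Fin p × Fin p, (q.1 : ℕ) ≠ 0 → (q.2 : ℕ) ≠ 0 → wittOp2 p k (-1) g q = 0 := by
    intro g hg q hq1 hq2
    rw [Submodule.mkQ_apply, Submodule.mapQ_apply, Submodule.Quotient.mk_eq_zero] at hg
    exact ((mem_symmPrime_iff p k h2k _).1 hg).1 q hq1 hq2
  by_cases hE : Even i
  · rw [if_pos hE]
    have hiltp : i < p := lt_of_le_of_ne hip (by rintro rfl; exact hpodd hE)
    have hsub : Submodule.map (symmPrime p k).mkQ (symmPart p k ⊓ degComp p k i) ⊓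
        LinearMap.ker (Submodule.mapQ (symmPrime p k) (symmPrime p k) (wittOp2 p k (-1)) hstab)
        = Submodule.span k {(symmPrime p k).mkQ (wvec p k i)} := by
      apply le_antisymm
      · intro x hx
        obtain ⟨hx1, hx2⟩ := Submodule.mem_inf.1 hx
        obtain ⟨g, hg, rfl⟩ := Submodule.mem_map.1 hx1
        obtain ⟨hgs, hgd⟩ := Submodule.mem_inf.1 hg
        have hint := hker_int g (LinearMap.mem_ker.1 hx2)
        rw [Submodule.mem_span_singleton]
        refine ⟨-(g (⟨1, by omega⟩, ⟨i - 1, by omega⟩) * (i : k)⁻¹), ?_⟩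
        rw [← map_smul, Submodule.mkQ_apply, Submodule.mkQ_apply, Submodule.Quotient.eq]
        apply (mem_symmPrime_iff p k h2k _).2
        constructor
        · intro q hq1 hq2
          rw [Pi.sub_apply, Pi.smul_apply, smul_eq_mul]
          by_cases hd : (q.1 : ℕ) + (q.2 : ℕ) = i
          · rw [key_coeff p k i h2 hiltp g hgd hint q (by omega) (by omega) hd,
              wvec, if_pos hd]
            ring
          · rw [hgd q hd, wvec, if_neg hd, mul_zero, sub_zero]
        · intro q
          rw [Pi.sub_apply, Pi.sub_apply, Pi.smul_apply, Pi.smul_apply, smul_eq_mul,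
            smul_eq_mul, hgs q, wvec_symm p k i hE q]
      · rw [Submodule.span_le, Set.singleton_subset_iff]
        refine Submodule.mem_inf.2 ⟨Submodule.mem_map_of_mem
          (Submodule.mem_inf.2 ⟨wvec_symm p k i hE, wvec_degComp p k i⟩), ?_⟩
        rw [LinearMap.mem_ker, Submodule.mkQ_apply, Submodule.mapQ_apply,
          wvec_e_zero p k i h2 hiltp]
        exact Submodule.Quotient.mk_zero _
    rw [hsub]
    exact finrank_span_singleton (by
      rw [Submodule.mkQ_apply, ne_eq, Submodule.Quotient.mk_eq_zero]
      exact wvec_not_mem p k i h2 hiltp)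
  · rw [if_neg hE]
    have hbot : Submodule.map (symmPrime p k).mkQ (symmPart p k ⊓ degComp p k i) ⊓
        LinearMap.ker (Submodule.mapQ (symmPrime p k) (symmPrime p k) (wittOp2 p k (-1)) hstab)
        = ⊥ := by
      rw [eq_bot_iff]
      intro x hx
      obtain ⟨hx1, hx2⟩ := Submodule.mem_inf.1 hx
      obtain ⟨g, hg, rfl⟩ := Submodule.mem_map.1 hx1
      obtain ⟨hgs, hgd⟩ := Submodule.mem_inf.1 hg
      have hint := hker_int g (LinearMap.mem_ker.1 hx2)
      rw [Submodule.mem_bot, Submodule.mkQ_apply, Submodule.Quotient.mk_eq_zero]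
      by_cases hiltp : i < p
      · have k1 := key_coeff p k i h2 hiltp g hgd hint (⟨1, by omega⟩, ⟨i - 1, by omega⟩)
          (by show 1 ≤ 1; omega) (by show 1 ≤ i - 1; omega) (by show 1 + (i - 1) = i; omega)
        have k2 := key_coeff p k i h2 hiltp g hgd hint (⟨i - 1, by omega⟩, ⟨1, by omega⟩)
          (by show 1 ≤ i - 1; omega) (by show i - 1 ≤ i - 1; omega)
          (by show (i - 1) + 1 = i; omega)
        have hswap : g (⟨i - 1, by omega⟩, ⟨1, by omega⟩) = g (⟨1, by omega⟩, ⟨i - 1, by omega⟩) :=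
          hgs (⟨1, by omega⟩, ⟨i - 1, by omega⟩)
        have hOdd : Odd i := Nat.odd_iff.2 (by rw [Nat.even_iff] at hE; omega)
        have he1 : ((-1 : k)) ^ (((⟨1, by omega⟩ : Fin p)) : ℕ) = -1 := pow_one _
        have he2 : ((-1 : k)) ^ (((⟨i - 1, by omega⟩ : Fin p)) : ℕ) = 1 := by
          show ((-1 : k)) ^ (i - 1) = 1
          exact Even.neg_one_pow (by rw [Nat.odd_iff] at hOdd; rw [Nat.even_iff]; omega)
        have hch1 : (i.choose (((⟨1, by omega⟩ : Fin p)) : ℕ)) = i := by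
          show i.choose 1 = i; exact Nat.choose_one_right i
        have hch2 : (i.choose (((⟨i - 1, by omega⟩ : Fin p)) : ℕ)) = i := by
          show i.choose (i - 1) = i
          rw [show i - 1 = i - 1 from rfl, Nat.choose_symm (by omega), Nat.choose_one_right]
        rw [he1, hch1] at k1
        rw [he2, hch2] at k2
        have hG : g (⟨1, by omega⟩, ⟨i - 1, by omega⟩) = 0 := by
          have hi : ((i : ℕ) : k) ≠ 0 := cast_ne_zero_of_lt_char p k i (by omega) hiltp
          rw [hswap] at k2
          have e : -(g (⟨1, by omega⟩, ⟨i - 1, by omega⟩) * ((i : ℕ) : k)⁻¹) * 1 * ((i : ℕ) : k)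
              = -(g (⟨1, by omega⟩, ⟨i - 1, by omega⟩)) := by
            field_simp
          rw [e] at k2
          have h2' : (2 : k) * g (⟨1, by omega⟩, ⟨i - 1, by omega⟩) = 0 := by
            linear_combination k2
          exact (mul_eq_zero.1 h2').resolve_left h2k
        apply (mem_symmPrime_iff p k h2k _).2
        refine ⟨?_, fun q => hgs q⟩
        intro q hq1 hq2
        by_cases hd : (q.1 : ℕ) + (q.2 : ℕ) = i
        · rw [key_coeff p k i h2 hiltp g hgd hint q (by omega) (by omega) hd, hG]
          ring
        · exact hgd q hd
      · have hip' : i = p := by omega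
        rw [hip'] at hgd
        rw [key_p p k hp3 g hgd hgs hint]
        exact Submodule.zero_mem _
    rw [hbot]
    exact finrank_bot k _
end

section
/- With notation as before, dim_k((A_a^+)_i ∩ ker e_{-1}) = 1 if i ∈ {3, 5, ..., p} (i odd), and = 0 if i ∈ {4, 6, ..., p−1} (i even), where A_a^+ = A_a/span{x_1^i − x_2^i : 1 ≤ i ≤ p−1} is the antisymmetric part of the top level, graded by total degree. -/
set_option synthInstance.maxHeartbeats 1000000
set_option maxHeartbeats 1000000

/-!
Write `c_b` for the coefficient of `x₁^(i-b) x₂^b` in a homogeneous antisymmetric `f` of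
degree `i`. Modulo `A_a'` only the interior coefficients `1 ≤ b ≤ i-1` matter, and
`e_{-1} f ∈ A_a'` says exactly that `(i-b) c_b + (b+1) c_{b+1} = 0` for `1 ≤ b ≤ i-2`. As
`i ≤ p`, all these coefficients are units, so a solution is determined by any one of its
values. For even `i`, antisymmetry kills the middle coefficient `c_{i/2}`, hence all of them.
For odd `i`, the truncation of `(x₁ - x₂)^i / i!` is a solution with `c_1 ≠ 0`.
-/

def monoCoeff {p : ℕ} {k : Type*} [Zero k] (f : Fin p × Fin p → k) (a b : ℕ) : k :=
  if h : a < p ∧ b < p then f (⟨a, h.1⟩, ⟨b, h.2⟩) else 0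

section monoCoeff

variable {p : ℕ} {k : Type*} [Zero k] (f : Fin p × Fin p → k)

@[simp]
lemma monoCoeff_fin (a b : Fin p) : monoCoeff f a b = f (a, b) := by
  simp [monoCoeff]

lemma monoCoeff_of_not_lt {a b : ℕ} (h : ¬(a < p ∧ b < p)) : monoCoeff f a b = 0 :=
  dif_neg h

lemma monoCoeff_add {k : Type*} [AddZeroClass k] (f g : Fin p × Fin p → k) (a b : ℕ) :
    monoCoeff (f + g) a b = monoCoeff f a b + monoCoeff g a b := by
  unfold monoCoeff; split_ifs <;> simp

lemma monoCoeff_sub {k : Type*} [AddGroup k] (f g : Fin p × Fin p → k) (a b : ℕ) :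
    monoCoeff (f - g) a b = monoCoeff f a b - monoCoeff g a b := by
  unfold monoCoeff; split_ifs <;> simp

lemma monoCoeff_smul {k : Type*} [MulZeroClass k] (c : k) (f : Fin p × Fin p → k) (a b : ℕ) :
    monoCoeff (c • f) a b = c * monoCoeff f a b := by
  unfold monoCoeff; split_ifs <;> simp

lemma sum_ite_mul_eq_monoCoeff {k : Type*} [Semiring k] (f : Fin p × Fin p → k)
    (a b : ℕ) (c : k) :
    ∑ r : Fin p × Fin p, (if (r.1 : ℕ) = a ∧ (r.2 : ℕ) = b then c else 0) * f r =
      c * monoCoeff f a b := by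
  by_cases h : a < p ∧ b < p
  · rw [Fintype.sum_eq_single (⟨a, h.1⟩, ⟨b, h.2⟩)]
    · simp [monoCoeff, h]
    · rintro r hr
      rw [if_neg, zero_mul]
      rintro ⟨h1, h2⟩
      exact hr (Prod.ext (Fin.ext h1) (Fin.ext h2))
  · rw [monoCoeff_of_not_lt f h, mul_zero]
    refine Finset.sum_eq_zero fun r _ => ?_
    rw [if_neg, zero_mul]
    rintro ⟨rfl, rfl⟩
    exact h ⟨r.1.isLt, r.2.isLt⟩

end monoCoeff

lemma monoCoeff_wittOp2_neg_one {p : ℕ} {k : Type} [Field k] (f : Fin p × Fin p → k) (a b : ℕ) :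
    monoCoeff (wittOp2 p k (-1) f) a b =
      (a + 1) * monoCoeff f (a + 1) b + (b + 1) * monoCoeff f a (b + 1) := by
  by_cases h : a < p ∧ b < p
  · rw [show monoCoeff (wittOp2 p k (-1) f) a b = wittOp2 p k (-1) f (⟨a, h.1⟩, ⟨b, h.2⟩) from
      monoCoeff_fin _ ⟨a, h.1⟩ ⟨b, h.2⟩]
    have e1 (r : Fin p × Fin p) : ((r.1 : ℕ) : ℤ) = a - -1 ∧ r.2 = ⟨b, h.2⟩ ↔
        (r.1 : ℕ) = a + 1 ∧ (r.2 : ℕ) = b := by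
      simp only [Fin.ext_iff]; omega
    have e2 (r : Fin p × Fin p) : r.1 = ⟨a, h.1⟩ ∧ ((r.2 : ℕ) : ℤ) = b - -1 ↔
        (r.1 : ℕ) = a ∧ (r.2 : ℕ) = b + 1 := by
      simp only [Fin.ext_iff]; omega
    simp only [wittOp2, Matrix.toLin'_apply, Matrix.mulVec, dotProduct, Matrix.of_apply, e1, e2,
      add_mul, Finset.sum_add_distrib, sum_ite_mul_eq_monoCoeff]
    push_cast
    ring
  · have h1 : ¬(a + 1 < p ∧ b < p) := by omega
    have h2 : ¬(a < p ∧ b + 1 < p) := by omega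
    simp [monoCoeff_of_not_lt _ h, monoCoeff_of_not_lt _ h1, monoCoeff_of_not_lt _ h2]

section coefficients

variable {p : ℕ} {k : Type} [Field k]

lemma monoCoeff_mono (i j a b : ℕ) :
    monoCoeff (mono p k i j) a b = if a = i ∧ b = j ∧ a < p ∧ b < p then 1 else 0 := by
  unfold monoCoeff mono; split_ifs <;> simp_all <;> omega

lemma mem_antisymmPart_iff_monoCoeff {f : Fin p × Fin p → k} :
    f ∈ antisymmPart p k ↔ ∀ a b : ℕ, monoCoeff f b a = -monoCoeff f a b := by
  refine ⟨fun hf a b => ?_, fun hf q => by simpa using hf q.1 q.2⟩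
  by_cases h : a < p ∧ b < p
  · unfold monoCoeff
    rw [dif_pos h, dif_pos h.symm]
    exact hf (⟨a, h.1⟩, ⟨b, h.2⟩)
  · rw [monoCoeff_of_not_lt f h, monoCoeff_of_not_lt f (by tauto), neg_zero]

lemma mem_degComp_iff_monoCoeff {f : Fin p × Fin p → k} {i : ℕ} :
    f ∈ degComp p k i ↔ ∀ a b : ℕ, a + b ≠ i → monoCoeff f a b = 0 := by
  refine ⟨fun hf a b hab => ?_, fun hf q hq => by simpa using hf q.1 q.2 hq⟩
  by_cases h : a < p ∧ b < p
  · unfold monoCoeff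
    rw [dif_pos h]
    exact hf _ hab
  · exact monoCoeff_of_not_lt f h

lemma monoCoeff_eq_zero_of_mem_antisymmPrime {g : Fin p × Fin p → k}
    (hg : g ∈ antisymmPrime p k) {a b : ℕ} (ha : 1 ≤ a) (hb : 1 ≤ b) : monoCoeff g a b = 0 := by
  induction hg using Submodule.span_induction with
  | mem g hg =>
    obtain ⟨j, -, rfl⟩ := hg
    simp only [monoCoeff_sub, monoCoeff_mono]
    rw [if_neg (by omega), if_neg (by omega), sub_zero]
  | zero => simp [monoCoeff]
  | add g g' _ _ hg hg' => rw [monoCoeff_add, hg, hg', add_zero]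
  | smul c g _ hg => rw [monoCoeff_smul, hg, mul_zero]

lemma mem_antisymmPrime_of_monoCoeff_eq_zero {f : Fin p × Fin p → k} {i : ℕ} (hi : 1 ≤ i)
    (hanti : f ∈ antisymmPart p k) (hdeg : f ∈ degComp p k i)
    (hint : ∀ a b : ℕ, 1 ≤ a → 1 ≤ b → monoCoeff f a b = 0) : f ∈ antisymmPrime p k := by
  rw [mem_antisymmPart_iff_monoCoeff] at hanti
  rw [mem_degComp_iff_monoCoeff] at hdeg
  have hcoeff (a b : ℕ) : monoCoeff f a b =
      monoCoeff f i 0 * ((if a = i ∧ b = 0 then 1 else 0) - if a = 0 ∧ b = i then 1 else 0) := by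
    by_cases hab : a + b = i
    · rcases Nat.eq_zero_or_pos a with rfl | ha
      · rw [zero_add] at hab; subst hab
        rw [if_neg (by omega), if_pos ⟨rfl, rfl⟩, hanti]; ring
      rcases Nat.eq_zero_or_pos b with rfl | hb
      · rw [add_zero] at hab; subst hab
        rw [if_pos ⟨rfl, rfl⟩, if_neg (by omega)]; ring
      rw [hint a b ha hb, if_neg (by omega), if_neg (by omega)]; ring
    · rw [hdeg a b hab, if_neg (by omega), if_neg (by omega)]; ring
  have hf : f = monoCoeff f i 0 • (mono p k i 0 - mono p k 0 i) := by
    funext q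
    rw [show f q = monoCoeff f q.1 q.2 by simp, hcoeff]
    simp [mono]
  by_cases hip : i < p
  · rw [hf]
    exact Submodule.smul_mem _ _ (Submodule.subset_span ⟨⟨i, hip⟩, by simp; omega, rfl⟩)
  · rw [hf, monoCoeff_of_not_lt f (by omega), zero_smul]
    exact Submodule.zero_mem _

end coefficients

lemma Submodule.map_mkQ_inf_ker_mapQ {R M M₂ : Type*} [Ring R] [AddCommGroup M] [Module R M]
    [AddCommGroup M₂] [Module R M₂] (N : Submodule R M) (N₂ : Submodule R M₂)
    (V : Submodule R M) (f : M →ₗ[R] M₂) (h : N ≤ N₂.comap f) :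
    V.map N.mkQ ⊓ LinearMap.ker (N.mapQ N₂ f h) = (V ⊓ N₂.comap f).map N.mkQ := by
  ext x
  constructor
  · rintro ⟨⟨v, hv, rfl⟩, hker⟩
    refine ⟨v, ⟨hv, ?_⟩, rfl⟩
    simpa [Submodule.Quotient.mk_eq_zero] using hker
  · rintro ⟨v, ⟨hv, hfv⟩, rfl⟩
    refine ⟨⟨v, hv, rfl⟩, ?_⟩
    simpa [Submodule.Quotient.mk_eq_zero] using hfv

lemma natCast_ne_zero_of_lt {R : Type*} [AddMonoidWithOne R] {p : ℕ} [CharP R p] {n : ℕ}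
    (h0 : 0 < n) (hn : n < p) : (n : R) ≠ 0 := by
  rw [Ne, CharP.cast_eq_zero_iff R p]
  exact fun h => absurd (Nat.le_of_dvd h0 h) (by omega)

lemma natCast_factorial_ne_zero_of_lt {R : Type*} [Semiring R] [NoZeroDivisors R] [Nontrivial R]
    {p : ℕ} [CharP R p] {n : ℕ} (hn : n < p) : (n.factorial : R) ≠ 0 := by
  induction n with
  | zero => simp
  | succ n ih =>
    rw [Nat.factorial_succ, Nat.cast_mul]
    exact mul_ne_zero (natCast_ne_zero_of_lt n.succ_pos hn) (ih (by omega))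

lemma eq_zero_iff_eq_zero_of_mul_add_mul_eq_zero {R : Type*} [Ring R] [NoZeroDivisors R]
    {x y u v : R} (hx : x ≠ 0) (hy : y ≠ 0) (h : x * u + y * v = 0) : u = 0 ↔ v = 0 := by
  constructor <;> rintro rfl <;> simpa [hx, hy] using h

section wittOp2

variable {p : ℕ} {k : Type} [Field k]

lemma wittOp2_neg_one_mem_antisymmPart {f : Fin p × Fin p → k} (hf : f ∈ antisymmPart p k) :
    wittOp2 p k (-1) f ∈ antisymmPart p k := by
  rw [mem_antisymmPart_iff_monoCoeff] at hf ⊢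
  intro a b
  rw [monoCoeff_wittOp2_neg_one, monoCoeff_wittOp2_neg_one, hf a (b + 1), hf (a + 1) b]
  ring

lemma wittOp2_neg_one_mem_degComp {f : Fin p × Fin p → k} {i : ℕ} (hf : f ∈ degComp p k (i + 1)) :
    wittOp2 p k (-1) f ∈ degComp p k i := by
  rw [mem_degComp_iff_monoCoeff] at hf ⊢
  intro a b hab
  rw [monoCoeff_wittOp2_neg_one, hf (a + 1) b (by omega), hf a (b + 1) (by omega)]
  ring

lemma natCast_mul_monoCoeff_add_eq_zero {f : Fin p × Fin p → k}
    (hf : wittOp2 p k (-1) f ∈ antisymmPrime p k) {a b : ℕ} (ha : 1 ≤ a) (hb : 1 ≤ b) :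
    ((a + 1 : ℕ) : k) * monoCoeff f (a + 1) b + ((b + 1 : ℕ) : k) * monoCoeff f a (b + 1) = 0 := by
  push_cast
  rw [← monoCoeff_wittOp2_neg_one]
  exact monoCoeff_eq_zero_of_mem_antisymmPrime hf ha hb

end wittOp2

lemma eq_zero_iff_eq_zero_of_recurrence {k : Type*} [Field k] {p : ℕ} [CharP k p] {i : ℕ}
    (hip : i ≤ p) {c : ℕ → k}
    (hrec : ∀ b, 1 ≤ b → b + 2 ≤ i → ((i - b : ℕ) : k) * c b + ((b + 1 : ℕ) : k) * c (b + 1) = 0)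
    {b : ℕ} (hb : 1 ≤ b) (hbi : b < i) : c b = 0 ↔ c 1 = 0 := by
  induction b, hb using Nat.le_induction with
  | base => rfl
  | succ b hb ih =>
    rw [← ih (by omega)]
    exact (eq_zero_iff_eq_zero_of_mul_add_mul_eq_zero (natCast_ne_zero_of_lt (by omega) (by omega))
      (natCast_ne_zero_of_lt (by omega) (by omega)) (hrec b hb (by omega))).symm

/-- The preimage in `A_a ∩ A_i` of the kernel of `e_{-1}` on `A_{(2)}/A_a'`. -/
noncomputable def lowestWeightSpace (p : ℕ) (k : Type) [Field k] (i : ℕ) :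
    Submodule k (Fin p × Fin p → k) :=
  antisymmPart p k ⊓ degComp p k i ⊓ (antisymmPrime p k).comap (wittOp2 p k (-1))

section lowestWeightSpace

variable {p : ℕ} {k : Type} [Field k] [CharP k p]

lemma mem_antisymmPrime_of_monoCoeff_eq_zero_of_mem_lowestWeightSpace {i : ℕ} (hip : i ≤ p)
    {f : Fin p × Fin p → k} (hf : f ∈ lowestWeightSpace p k i) {m : ℕ} (hm : 1 ≤ m)
    (hmi : m < i) (hfm : monoCoeff f (i - m) m = 0) : f ∈ antisymmPrime p k := by
  obtain ⟨⟨hanti, hdeg⟩, hker⟩ := hf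
  have hrec (b : ℕ) (hb : 1 ≤ b) (hbi : b + 2 ≤ i) : ((i - b : ℕ) : k) * monoCoeff f (i - b) b +
      ((b + 1 : ℕ) : k) * monoCoeff f (i - (b + 1)) (b + 1) = 0 := by
    have h := natCast_mul_monoCoeff_add_eq_zero hker (a := i - (b + 1)) (by omega) hb
    rwa [show i - (b + 1) + 1 = i - b by omega] at h
  have hantidiag (b : ℕ) (hb : 1 ≤ b) (hbi : b < i) : monoCoeff f (i - b) b = 0 :=
    (eq_zero_iff_eq_zero_of_recurrence hip hrec hb hbi).2
      ((eq_zero_iff_eq_zero_of_recurrence hip hrec hm hmi).1 hfm)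
  refine mem_antisymmPrime_of_monoCoeff_eq_zero (by omega) hanti hdeg fun a b ha hb => ?_
  by_cases hab : a + b = i
  · obtain rfl : a = i - b := by omega
    exact hantidiag b hb (by omega)
  · exact mem_degComp_iff_monoCoeff.1 hdeg a b hab

lemma lowestWeightSpace_le_antisymmPrime_of_even (hp : 2 < p) {i : ℕ} (hi : i ≠ 0) (hip : i ≤ p)
    (heven : Even i) : lowestWeightSpace p k i ≤ antisymmPrime p k := by
  intro f hf
  obtain ⟨m, rfl⟩ := heven
  refine mem_antisymmPrime_of_monoCoeff_eq_zero_of_mem_lowestWeightSpace hip hf (m := m)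
    (by omega) (by omega) ?_
  have hswap := mem_antisymmPart_iff_monoCoeff.1 hf.1.1 m m
  have h2 : ((2 : ℕ) : k) ≠ 0 := natCast_ne_zero_of_lt two_pos hp
  rw [Nat.add_sub_cancel]
  have : ((2 : ℕ) : k) * monoCoeff f m m = 0 := by push_cast; linear_combination hswap
  exact (mul_eq_zero.1 this).resolve_left h2

end lowestWeightSpace

/-- The truncation of `(x₁ - x₂)^i / i!`: its coefficients `(-1)^b / (a! b!)` only involve
exponents `a, b < p`, so they make sense even for `i = p`. -/
noncomputable def lowestWeightVector (p : ℕ) (k : Type) [Field k] (i : ℕ) :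
    Fin p × Fin p → k :=
  fun q => if (q.1 : ℕ) + q.2 = i then
    (-1) ^ (q.2 : ℕ) * (((q.1 : ℕ).factorial * (q.2 : ℕ).factorial : ℕ) : k)⁻¹ else 0

section lowestWeightVector

variable {p : ℕ} {k : Type} [Field k] {i : ℕ}

lemma monoCoeff_lowestWeightVector (a b : ℕ) :
    monoCoeff (lowestWeightVector p k i) a b =
      if a + b = i ∧ a < p ∧ b < p then (-1) ^ b * ((a.factorial * b.factorial : ℕ) : k)⁻¹
      else 0 := by
  unfold monoCoeff lowestWeightVector
  split_ifs <;> simp_all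

lemma lowestWeightVector_mem_antisymmPart (hodd : Odd i) :
    lowestWeightVector p k i ∈ antisymmPart p k := by
  rw [mem_antisymmPart_iff_monoCoeff]
  intro a b
  simp only [monoCoeff_lowestWeightVector]
  by_cases hab : a + b = i ∧ a < p ∧ b < p
  · rw [if_pos hab, if_pos (by omega), mul_comm b.factorial]
    have hodd' : Odd (a + b) := hab.1 ▸ hodd
    rcases Nat.even_or_odd b with hb | hb
    · rw [hb.neg_one_pow, (Nat.odd_add.1 hodd').2 hb |>.neg_one_pow]; ring
    · rw [hb.neg_one_pow, (Nat.odd_add'.1 hodd').1 hb |>.neg_one_pow]; ring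
  · rw [if_neg hab, if_neg (by omega), neg_zero]

lemma lowestWeightVector_mem_degComp : lowestWeightVector p k i ∈ degComp p k i := by
  rw [mem_degComp_iff_monoCoeff]
  intro a b hab
  rw [monoCoeff_lowestWeightVector, if_neg (by omega)]

variable [CharP k p]

lemma wittOp2_neg_one_lowestWeightVector_mem_antisymmPrime (hi : 2 ≤ i) (hip : i ≤ p)
    (hodd : Odd i) : wittOp2 p k (-1) (lowestWeightVector p k i) ∈ antisymmPrime p k := by
  have hdeg : lowestWeightVector p k i ∈ degComp p k (i - 1 + 1) :=
    (Nat.sub_add_cancel (by omega : 1 ≤ i)).symm ▸ lowestWeightVector_mem_degComp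
  refine mem_antisymmPrime_of_monoCoeff_eq_zero (i := i - 1) (by omega)
    (wittOp2_neg_one_mem_antisymmPart (lowestWeightVector_mem_antisymmPart hodd))
    (wittOp2_neg_one_mem_degComp hdeg) fun a b ha hb => ?_
  rw [monoCoeff_wittOp2_neg_one, monoCoeff_lowestWeightVector, monoCoeff_lowestWeightVector]
  by_cases hab : a + b + 1 = i
  · rw [if_pos (by omega), if_pos (by omega), Nat.factorial_succ, Nat.factorial_succ]
    have ha' : ((a + 1 : ℕ) : k) ≠ 0 := natCast_ne_zero_of_lt (by omega) (by omega)
    have hb' : ((b + 1 : ℕ) : k) ≠ 0 := natCast_ne_zero_of_lt (by omega) (by omega)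
    have haf : (a.factorial : k) ≠ 0 := natCast_factorial_ne_zero_of_lt (p := p) (by omega)
    have hbf : (b.factorial : k) ≠ 0 := natCast_factorial_ne_zero_of_lt (p := p) (by omega)
    push_cast at ha' hb' ⊢
    field_simp
    ring
  · rw [if_neg (by omega), if_neg (by omega)]
    ring

lemma lowestWeightVector_mem_lowestWeightSpace (hi : 2 ≤ i) (hip : i ≤ p) (hodd : Odd i) :
    lowestWeightVector p k i ∈ lowestWeightSpace p k i :=
  ⟨⟨lowestWeightVector_mem_antisymmPart hodd, lowestWeightVector_mem_degComp⟩,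
    wittOp2_neg_one_lowestWeightVector_mem_antisymmPrime hi hip hodd⟩

lemma monoCoeff_lowestWeightVector_ne_zero (hi : 2 ≤ i) (hip : i ≤ p) :
    monoCoeff (lowestWeightVector p k i) (i - 1) 1 ≠ 0 := by
  rw [monoCoeff_lowestWeightVector, if_pos (by omega)]
  have hf : (((i - 1).factorial * Nat.factorial 1 : ℕ) : k) ≠ 0 := by
    rw [Nat.factorial_one, mul_one]
    exact natCast_factorial_ne_zero_of_lt (by omega)
  simpa using hf

lemma lowestWeightVector_not_mem_antisymmPrime (hi : 2 ≤ i) (hip : i ≤ p) :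
    lowestWeightVector p k i ∉ antisymmPrime p k := fun h =>
  monoCoeff_lowestWeightVector_ne_zero hi hip
    (monoCoeff_eq_zero_of_mem_antisymmPrime h (by omega) le_rfl)

lemma exists_sub_smul_lowestWeightVector_mem_antisymmPrime (hi : 2 ≤ i) (hip : i ≤ p)
    (hodd : Odd i) {f : Fin p × Fin p → k} (hf : f ∈ lowestWeightSpace p k i) :
    ∃ c : k, f - c • lowestWeightVector p k i ∈ antisymmPrime p k := by
  set v := lowestWeightVector p k i
  have hv := monoCoeff_lowestWeightVector_ne_zero (k := k) hi hip
  refine ⟨monoCoeff f (i - 1) 1 / monoCoeff v (i - 1) 1, ?_⟩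
  refine mem_antisymmPrime_of_monoCoeff_eq_zero_of_mem_lowestWeightSpace hip
    (sub_mem hf (Submodule.smul_mem _ _ (lowestWeightVector_mem_lowestWeightSpace hi hip hodd)))
    le_rfl (by omega) ?_
  rw [monoCoeff_sub, monoCoeff_smul, div_mul_cancel₀ _ hv, sub_self]

end lowestWeightVector

lemma map_mkQ_lowestWeightSpace_of_odd {p : ℕ} {k : Type} [Field k] [CharP k p] {i : ℕ}
    (hi : 2 ≤ i) (hip : i ≤ p) (hodd : Odd i) :
    (lowestWeightSpace p k i).map (antisymmPrime p k).mkQ =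
      Submodule.span k {(antisymmPrime p k).mkQ (lowestWeightVector p k i)} := by
  refine le_antisymm ?_ ?_
  · rintro _ ⟨f, hf, rfl⟩
    obtain ⟨c, hc⟩ := exists_sub_smul_lowestWeightVector_mem_antisymmPrime hi hip hodd hf
    refine Submodule.mem_span_singleton.2 ⟨c, ?_⟩
    rw [← map_smul, Submodule.mkQ_apply, Submodule.mkQ_apply, Submodule.Quotient.eq]
    simpa [neg_sub] using Submodule.neg_mem _ hc
  · rw [Submodule.span_le, Set.singleton_subset_iff]
    exact Submodule.mem_map_of_mem (lowestWeightVector_mem_lowestWeightSpace hi hip hodd)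

theorem antisymm_top_level_lowest_weight_dims_general (p : ℕ) (k : Type) [Field k]
    [CharP k p] (hp3 : 3 < p)
    (hstab : antisymmPrime p k ≤ (antisymmPrime p k).comap (wittOp2 p k (-1))) :
    ∀ i : ℕ, 3 ≤ i → i ≤ p →
      Module.finrank k
        ↥(Submodule.map (antisymmPrime p k).mkQ (antisymmPart p k ⊓ degComp p k i) ⊓
          LinearMap.ker (Submodule.mapQ (antisymmPrime p k) (antisymmPrime p k)
            (wittOp2 p k (-1)) hstab)) =
        if Odd i then 1 else 0 := by
  intro i hi hip
  rw [Submodule.map_mkQ_inf_ker_mapQ]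
  change Module.finrank k ((lowestWeightSpace p k i).map (antisymmPrime p k).mkQ) = _
  split_ifs with hodd
  · rw [map_mkQ_lowestWeightSpace_of_odd (by omega) hip hodd]
    refine finrank_span_singleton fun h => ?_
    exact lowestWeightVector_not_mem_antisymmPrime (by omega) hip
      ((Submodule.Quotient.mk_eq_zero _).1 h)
  · have hle := lowestWeightSpace_le_antisymmPrime_of_even (k := k) (by omega) (by omega) hip
      (Nat.not_odd_iff_even.1 hodd)
    rw [LinearMap.le_ker_iff_map.1 (by rwa [Submodule.ker_mkQ]), finrank_bot]

/-- in the antisymmetric top level `A_a⁺ = A_a/A_a'` (realized as the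
image of `A_a` in `A_{(2)}/A_a'`), graded by total degree, the kernel of `e_{-1}`
meets the degree-`i` component in a subspace of dimension `1` for odd `i` with
`3 ≤ i ≤ p`, and `0` for even `i` with `4 ≤ i ≤ p-1`. -/
theorem antisymm_top_level_lowest_weight_dims (p : ℕ) (k : Type) [Field k] [IsAlgClosed k]
    [CharP k p] (hp : p.Prime) (hp3 : 3 < p)
    (hstab : antisymmPrime p k ≤ (antisymmPrime p k).comap (wittOp2 p k (-1))) :
    ∀ i : ℕ, 3 ≤ i → i ≤ p →
      Module.finrank k
        ↥(Submodule.map (antisymmPrime p k).mkQ (antisymmPart p k ⊓ degComp p k i) ⊓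
          LinearMap.ker (Submodule.mapQ (antisymmPrime p k) (antisymmPrime p k)
            (wittOp2 p k (-1)) hstab)) =
        if Odd i then 1 else 0 :=
  antisymm_top_level_lowest_weight_dims_general p k hp3 hstab
end

section
/- Let V ⊆ A_{(2)} be a Z-graded W(1)-submodule generated by a homogeneous element v_i ∈ A_i with e_{-1}·v_i = 0 and with e_0-weight i not congruent to 0 mod p, and let V = V_i ⊕ ... ⊕ V_s be its graded decomposition. Then for 0 ≤ l < p−2, the operator e_{-1} : V_{l+i+1} → V_{l+i} is surjective. -/
set_option synthInstance.maxHeartbeats 1000000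
set_option maxHeartbeats 1000000

/-- The `W(1)`-submodule of `A_{(2)}` generated by `v`: the smallest subspace
containing `v` and stable under all operators `e_j`, `-1 ≤ j ≤ p-2`. -/
noncomputable def genSubmodule (p : ℕ) (k : Type) [Field k] (v : Fin p × Fin p → k) :
    Submodule k (Fin p × Fin p → k) :=
  sInf {N | v ∈ N ∧ ∀ j : ℤ, -1 ≤ j → j ≤ (p : ℤ) - 2 → ∀ f ∈ N, wittOp2 p k j f ∈ N}


set_option linter.unusedSectionVars false
namespace WittAux

variable {p : ℕ} {k : Type} [Field k]

/-- Extension of a coordinate function on `Fin p × Fin p` to all of `ℤ × ℤ` by zero. -/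
noncomputable def extC (f : Fin p × Fin p → k) (a b : ℤ) : k :=
  ∑ r : Fin p × Fin p, if ((r.1 : ℤ) = a ∧ (r.2 : ℤ) = b) then f r else 0

lemma extC_eq (f : Fin p × Fin p → k) (r : Fin p × Fin p) :
    extC f (r.1 : ℤ) (r.2 : ℤ) = f r := by
  rw [extC, Finset.sum_eq_single r]
  · simp
  · intro r' _ hne
    rw [if_neg]
    rintro ⟨h1, h2⟩
    exact hne (Prod.ext (Fin.ext (by exact_mod_cast h1)) (Fin.ext (by exact_mod_cast h2)))
  · intro h; exact absurd (Finset.mem_univ r) h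

lemma extC_out (f : Fin p × Fin p → k) {a b : ℤ}
    (h : a < 0 ∨ (p : ℤ) ≤ a ∨ b < 0 ∨ (p : ℤ) ≤ b) : extC f a b = 0 := by
  apply Finset.sum_eq_zero
  rintro r -
  rw [if_neg]
  rintro ⟨h1, h2⟩
  have h3 : (0 : ℤ) ≤ (r.1 : ℤ) := Int.natCast_nonneg _
  have h4 : ((r.1 : ℤ)) < p := by exact_mod_cast r.1.isLt
  have h5 : (0 : ℤ) ≤ (r.2 : ℤ) := Int.natCast_nonneg _
  have h6 : ((r.2 : ℤ)) < p := by exact_mod_cast r.2.isLt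
  omega

lemma sum_ite_coord1 (c : k) (a : ℤ) (q2 : Fin p) (f : Fin p × Fin p → k) :
    (∑ r : Fin p × Fin p, (if ((r.1 : ℤ) = a ∧ r.2 = q2) then c else 0) * f r)
      = c * extC f a (q2 : ℤ) := by
  rw [extC, Finset.mul_sum]
  apply Finset.sum_congr rfl
  intro r _
  by_cases h1 : (r.1 : ℤ) = a
  · by_cases h2 : r.2 = q2
    · have h2' : (r.2 : ℤ) = (q2 : ℤ) := by rw [h2]
      simp [h1, h2, h2']
    · have h2' : ¬ ((r.2 : ℤ) = (q2 : ℤ)) := fun hh => h2 (Fin.ext (by exact_mod_cast hh))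
      simp [h1, h2, h2']
  · simp [h1]

lemma sum_ite_coord2 (c : k) (b : ℤ) (q1 : Fin p) (f : Fin p × Fin p → k) :
    (∑ r : Fin p × Fin p, (if (r.1 = q1 ∧ (r.2 : ℤ) = b) then c else 0) * f r)
      = c * extC f (q1 : ℤ) b := by
  rw [extC, Finset.mul_sum]
  apply Finset.sum_congr rfl
  intro r _
  by_cases h2 : (r.2 : ℤ) = b
  · by_cases h1 : r.1 = q1
    · have h1' : (r.1 : ℤ) = (q1 : ℤ) := by rw [h1]
      simp [h1, h2, h1']
    · have h1' : ¬ ((r.1 : ℤ) = (q1 : ℤ)) := fun hh => h1 (Fin.ext (by exact_mod_cast hh))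
      simp [h1, h2, h1']
  · simp [h2]

/-- Pointwise evaluation of the Witt operator. -/
lemma wittOp2_apply (j : ℤ) (f : Fin p × Fin p → k) (q : Fin p × Fin p) :
    wittOp2 p k j f q =
      (((q.1 : ℤ) - j : ℤ) : k) * extC f ((q.1 : ℤ) - j) (q.2 : ℤ)
      + (((q.2 : ℤ) - j : ℤ) : k) * extC f (q.1 : ℤ) ((q.2 : ℤ) - j) := by
  have h0 : wittOp2 p k j f q = ∑ r : Fin p × Fin p,
      ((if ((r.1 : ℤ) = (q.1 : ℤ) - j ∧ r.2 = q.2) then (((q.1 : ℤ) - j : ℤ) : k) else 0)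
       + (if (r.1 = q.1 ∧ (r.2 : ℤ) = (q.2 : ℤ) - j) then (((q.2 : ℤ) - j : ℤ) : k) else 0))
        * f r := by
    simp [wittOp2, Matrix.toLin'_apply, Matrix.mulVec, dotProduct, Matrix.of_apply]
  rw [h0]
  simp only [add_mul]
  rw [Finset.sum_add_distrib, sum_ite_coord1, sum_ite_coord2]

end WittAux

namespace WittAux

variable {p : ℕ} {k : Type} [Field k] [CharP k p]

lemma extC_eq' (f : Fin p × Fin p → k) (r1 r2 : Fin p) :
    extC f (r1 : ℤ) (r2 : ℤ) = f (r1, r2) :=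
  extC_eq f (r1, r2)

lemma ext_in_range (f : Fin p × Fin p → k) {a b : ℤ} (ha0 : 0 ≤ a) (hap : a < p)
    (hb0 : 0 ≤ b) (hbp : b < p) :
    ∃ r : Fin p × Fin p, (r.1 : ℤ) = a ∧ (r.2 : ℤ) = b ∧ extC f a b = f r := by
  refine ⟨(⟨a.toNat, by omega⟩, ⟨b.toNat, by omega⟩), ?_, ?_, ?_⟩
  · simp [Int.toNat_of_nonneg ha0]
  · simp [Int.toNat_of_nonneg hb0]
  · have h1 : ((⟨a.toNat, by omega⟩ : Fin p) : ℤ) = a := by simp [Int.toNat_of_nonneg ha0]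
    have h2 : ((⟨b.toNat, by omega⟩ : Fin p) : ℤ) = b := by simp [Int.toNat_of_nonneg hb0]
    conv_lhs => rw [← h1, ← h2]
    exact extC_eq' f _ _

lemma extE1 (j : ℤ) (f : Fin p × Fin p → k) {a b : ℤ} (ha0 : 0 ≤ a) (hap : a ≤ p)
    (hb0 : 0 ≤ b) (hbp : b < p) :
    (a : k) * extC (wittOp2 p k j f) a b
      = (a : k) * ((a - j : ℤ) : k) * extC f (a - j) b
        + (a : k) * ((b - j : ℤ) : k) * extC f a (b - j) := by
  rcases eq_or_lt_of_le hap with h | h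
  · have hz : (a : k) = 0 := by
      rw [h]
      exact_mod_cast CharP.cast_eq_zero k p
    rw [hz]; ring
  · obtain ⟨r, hr1, hr2, hre⟩ := ext_in_range (wittOp2 p k j f) ha0 h hb0 hbp
    rw [hre, wittOp2_apply, hr1, hr2]
    ring

lemma extE2 (j : ℤ) (f : Fin p × Fin p → k) {a b : ℤ} (ha0 : 0 ≤ a) (hap : a < p)
    (hb0 : 0 ≤ b) (hbp : b ≤ p) :
    (b : k) * extC (wittOp2 p k j f) a b
      = (b : k) * ((a - j : ℤ) : k) * extC f (a - j) b
        + (b : k) * ((b - j : ℤ) : k) * extC f a (b - j) := by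
  rcases eq_or_lt_of_le hbp with h | h
  · have hz : (b : k) = 0 := by
      rw [h]
      exact_mod_cast CharP.cast_eq_zero k p
    rw [hz]; ring
  · obtain ⟨r, hr1, hr2, hre⟩ := ext_in_range (wittOp2 p k j f) ha0 hap hb0 h
    rw [hre, wittOp2_apply, hr1, hr2]
    ring

lemma extF (f : Fin p × Fin p → k) {a b : ℤ} (hap : a < p) (hbp : b < p) :
    extC (wittOp2 p k (-1) f) a b
      = ((a + 1 : ℤ) : k) * extC f (a + 1) b + ((b + 1 : ℤ) : k) * extC f a (b + 1) := by
  by_cases ha0 : 0 ≤ a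
  · by_cases hb0 : 0 ≤ b
    · obtain ⟨r, hr1, hr2, hre⟩ := ext_in_range (wittOp2 p k (-1) f) ha0 hap hb0 hbp
      rw [hre, wittOp2_apply, hr1, hr2]
      norm_num
    · push_neg at hb0
      rw [extC_out _ (by omega)]
      rcases eq_or_lt_of_le (by omega : b + 1 ≤ 0) with h | h
      · rw [extC_out f (a := a + 1) (b := b) (by omega), h]
        norm_num
      · rw [extC_out f (a := a + 1) (b := b) (by omega),
          extC_out f (a := a) (b := b + 1) (by omega)]
        ring
  · push_neg at ha0
    rw [extC_out _ (by omega)]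
    rcases eq_or_lt_of_le (by omega : a + 1 ≤ 0) with h | h
    · rw [extC_out f (a := a) (b := b + 1) (by omega), h]
      norm_num
    · rw [extC_out f (a := a + 1) (b := b) (by omega),
        extC_out f (a := a) (b := b + 1) (by omega)]
      ring

/-- The key commutator identity `e₋₁ ∘ e_j = e_j ∘ e₋₁ + (j+1) e_{j-1}` for `j ≥ 0`. -/
lemma comm_neg_one (j : ℤ) (hj : 0 ≤ j) (f : Fin p × Fin p → k) :
    wittOp2 p k (-1) (wittOp2 p k j f)
      = wittOp2 p k j (wittOp2 p k (-1) f) + ((j + 1 : ℤ) : k) • wittOp2 p k (j - 1) f := by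
  funext q
  have ha0 : (0 : ℤ) ≤ (q.1 : ℤ) := Int.natCast_nonneg _
  have hap : ((q.1 : ℤ)) < p := by exact_mod_cast q.1.isLt
  have hb0 : (0 : ℤ) ≤ (q.2 : ℤ) := Int.natCast_nonneg _
  have hbp : ((q.2 : ℤ)) < p := by exact_mod_cast q.2.isLt
  show wittOp2 p k (-1) (wittOp2 p k j f) q
    = wittOp2 p k j (wittOp2 p k (-1) f) q + ((j + 1 : ℤ) : k) * wittOp2 p k (j - 1) f q
  rw [wittOp2_apply (-1), wittOp2_apply j (wittOp2 p k (-1) f), wittOp2_apply (j - 1)]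
  simp only [sub_neg_eq_add]
  rw [extE1 j f (by omega) (by omega) hb0 hbp,
      extE2 j f ha0 hap (by omega) (by omega),
      extF f (a := (q.1 : ℤ) - j) (b := (q.2 : ℤ)) (by omega) hbp,
      extF f (a := (q.1 : ℤ)) (b := (q.2 : ℤ) - j) hap (by omega)]
  have e1 : (q.1 : ℤ) - j + 1 = (q.1 : ℤ) + 1 - j := by ring
  have e2 : (q.2 : ℤ) - j + 1 = (q.2 : ℤ) + 1 - j := by ring
  have e3 : (q.1 : ℤ) - (j - 1) = (q.1 : ℤ) + 1 - j := by ring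
  have e4 : (q.2 : ℤ) - (j - 1) = (q.2 : ℤ) + 1 - j := by ring
  rw [e1, e2, e3, e4]
  push_cast
  ring

end WittAux

namespace WittAux

variable {p : ℕ} {k : Type} [Field k] [CharP k p]

lemma e0_smul {n : ℕ} {f : Fin p × Fin p → k} (hf : f ∈ degComp p k n) :
    wittOp2 p k 0 f = (n : k) • f := by
  funext q
  show wittOp2 p k 0 f q = (n : k) * f q
  rw [wittOp2_apply]
  simp only [sub_zero]
  rw [extC_eq f q]
  by_cases hq : (q.1 : ℕ) + (q.2 : ℕ) = n
  · rw [← add_mul]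
    congr 1
    have : (((q.1 : ℕ) : ℤ) : k) + (((q.2 : ℕ) : ℤ) : k) = ((n : ℕ) : k) := by
      push_cast
      exact_mod_cast congrArg (fun t : ℕ => (t : k)) hq
    exact_mod_cast this
  · rw [hf q hq]
    ring

/-- Projection onto the degree-`m` component. -/
def piF (p : ℕ) (k : Type) [Field k] (m : ℤ) :
    (Fin p × Fin p → k) →ₗ[k] (Fin p × Fin p → k) where
  toFun f := fun q => if ((q.1 : ℤ) + (q.2 : ℤ) = m) then f q else 0
  map_add' f g := by
    funext q
    by_cases h : ((q.1 : ℤ) + (q.2 : ℤ) = m) <;> simp [h]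
  map_smul' c f := by
    funext q
    by_cases h : ((q.1 : ℤ) + (q.2 : ℤ) = m) <;> simp [h]

lemma piF_apply (m : ℤ) (f : Fin p × Fin p → k) (q : Fin p × Fin p) :
    piF p k m f q = if ((q.1 : ℤ) + (q.2 : ℤ) = m) then f q else 0 := rfl

lemma extC_piF (m : ℤ) (f : Fin p × Fin p → k) (a b : ℤ) :
    extC (piF p k m f) a b = if (a + b = m) then extC f a b else 0 := by
  by_cases hin : 0 ≤ a ∧ a < (p : ℤ) ∧ 0 ≤ b ∧ b < (p : ℤ)
  · obtain ⟨r, hr1, hr2, hre⟩ := ext_in_range (piF p k m f) hin.1 hin.2.1 hin.2.2.1 hin.2.2.2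
    rw [hre, piF_apply, hr1, hr2]
    by_cases h : a + b = m
    · simp only [h, if_true]
      obtain ⟨r', hr1', hr2', hre'⟩ := ext_in_range f hin.1 hin.2.1 hin.2.2.1 hin.2.2.2
      rw [hre']
      congr 1
      exact Prod.ext (Fin.ext (by exact_mod_cast hr1.trans hr1'.symm))
        (Fin.ext (by exact_mod_cast hr2.trans hr2'.symm))
    · simp [h]
  · have hd : a < 0 ∨ (p : ℤ) ≤ a ∨ b < 0 ∨ (p : ℤ) ≤ b := by omega
    rw [extC_out _ hd]
    by_cases h : a + b = m <;> simp [h, extC_out f hd]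

lemma pi_op (j m : ℤ) (f : Fin p × Fin p → k) :
    piF p k m (wittOp2 p k j f) = wittOp2 p k j (piF p k (m - j) f) := by
  funext q
  rw [piF_apply, wittOp2_apply j (piF p k (m - j) f) q, extC_piF, extC_piF,
    wittOp2_apply j f q]
  have h1 : ((q.1 : ℤ) - j + (q.2 : ℤ) = m - j) ↔ ((q.1 : ℤ) + (q.2 : ℤ) = m) := by omega
  have h2 : ((q.1 : ℤ) + ((q.2 : ℤ) - j) = m - j) ↔ ((q.1 : ℤ) + (q.2 : ℤ) = m) := by omega
  rw [if_congr h1 rfl rfl, if_congr h2 rfl rfl]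
  by_cases h : ((q.1 : ℤ) + (q.2 : ℤ) = m) <;> simp [h]

lemma piF_eq_self {n : ℕ} {f : Fin p × Fin p → k} (hf : f ∈ degComp p k n) :
    piF p k (n : ℤ) f = f := by
  funext q
  rw [piF_apply]
  by_cases h : ((q.1 : ℤ) + (q.2 : ℤ) = (n : ℤ))
  · rw [if_pos h]
  · rw [if_neg h, hf q (by exact_mod_cast fun hh => h (by exact_mod_cast hh))]

lemma piF_eq_zero {n : ℕ} {f : Fin p × Fin p → k} (hf : f ∈ degComp p k n) {m : ℤ}
    (hm : m ≠ (n : ℤ)) : piF p k m f = 0 := by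
  funext q
  rw [piF_apply]
  by_cases h : ((q.1 : ℤ) + (q.2 : ℤ) = m)
  · rw [if_pos h, hf q (fun hh => hm (by omega))]
    rfl
  · rw [if_neg h]
    rfl

lemma degComp_of_piF {n : ℕ} {f : Fin p × Fin p → k} (h : piF p k (n : ℤ) f = f) :
    f ∈ degComp p k n := by
  intro q hq
  have h2 := congrFun h q
  rw [piF_apply, if_neg (fun hh => hq (by omega))] at h2
  exact h2.symm

lemma degComp_op {n : ℕ} {f : Fin p × Fin p → k} (hf : f ∈ degComp p k n) (j : ℕ) :
    wittOp2 p k (j : ℤ) f ∈ degComp p k (n + j) := by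
  apply degComp_of_piF
  have h := pi_op (p := p) (k := k) (j : ℤ) ((n : ℤ) + (j : ℤ)) f
  rw [show ((n : ℤ) + (j : ℤ)) - (j : ℤ) = (n : ℤ) by ring, piF_eq_self hf] at h
  rw [show (((n + j : ℕ)) : ℤ) = (n : ℤ) + (j : ℤ) by push_cast; ring]
  exact h

lemma natCast_ne (hp : p.Prime) {t : ℕ} (h1 : 0 < t) (h2 : t < p) : (t : k) ≠ 0 := by
  rw [Ne, CharP.cast_eq_zero_iff k p t]
  intro hdvd
  have := Nat.le_of_dvd h1 hdvd
  omega

end WittAux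

namespace WittAux

/-- Words `e_{j_m}⋯e_{j_1}·v` with all indices in `[1, p-2]`, of total added degree `d`. -/
inductive WordD (p : ℕ) (k : Type) [Field k] (v : Fin p × Fin p → k) :
    ℕ → (Fin p × Fin p → k) → Prop
  | base : WordD p k v 0 v
  | step {d : ℕ} {w : Fin p × Fin p → k} (j : ℕ) (hj1 : 1 ≤ j) (hj2 : (j : ℤ) ≤ (p : ℤ) - 2)
      (hw : WordD p k v d w) : WordD p k v (d + j) (wittOp2 p k (j : ℤ) w)

/-- Span of words of added degree exactly `d`. -/
noncomputable def SpanD (p : ℕ) (k : Type) [Field k] (v : Fin p × Fin p → k) (d : ℕ) :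
    Submodule k (Fin p × Fin p → k) :=
  Submodule.span k {w | WordD p k v d w}

/-- Span of words of total degree `m` (so added degree `m - i`). -/
noncomputable def SpD (p : ℕ) (k : Type) [Field k] (v : Fin p × Fin p → k) (i : ℕ) (m : ℤ) :
    Submodule k (Fin p × Fin p → k) :=
  Submodule.span k {w | ∃ d : ℕ, m = (i : ℤ) + d ∧ WordD p k v d w}

variable {p : ℕ} {k : Type} [Field k] [CharP k p] {v : Fin p × Fin p → k} {i : ℕ}

lemma wordD_zero {w : Fin p × Fin p → k} (h : WordD p k v 0 w) : w = v := by
  have H : ∀ d w', WordD p k v d w' → d = 0 → w' = v := by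
    intro d w' h'
    induction h' with
    | base => intro _; rfl
    | step j hj1 hj2 hw ih => intro h0; omega
  exact H 0 w h rfl

lemma wordD_degComp (hv : v ∈ degComp p k i) {d : ℕ} {w : Fin p × Fin p → k}
    (h : WordD p k v d w) : w ∈ degComp p k (i + d) := by
  induction h with
  | base => simpa using hv
  | step j hj1 hj2 hw ih =>
    have h2 := degComp_op ih j
    rwa [Nat.add_assoc] at h2

lemma spanD_le_degComp (hv : v ∈ degComp p k i) (d : ℕ) :
    SpanD p k v d ≤ degComp p k (i + d) :=
  Submodule.span_le.mpr (fun _ hw => wordD_degComp hv hw)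

lemma op_spanD (j : ℕ) (hj1 : 1 ≤ j) (hj2 : (j : ℤ) ≤ (p : ℤ) - 2) {d : ℕ}
    {w : Fin p × Fin p → k} (hw : w ∈ SpanD p k v d) :
    wittOp2 p k (j : ℤ) w ∈ SpanD p k v (d + j) := by
  refine Submodule.span_induction ?_ ?_ ?_ ?_ hw
  · intro x hx
    exact Submodule.subset_span (WordD.step j hj1 hj2 hx)
  · rw [map_zero]; exact zero_mem _
  · intro x y hx hy ihx ihy
    rw [map_add]; exact add_mem ihx ihy
  · intro c x hx ihx
    rw [map_smul]; exact Submodule.smul_mem _ c ihx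

lemma wordD_F (hv : v ∈ degComp p k i) (hker : wittOp2 p k (-1) v = 0) :
    ∀ {d : ℕ} {w : Fin p × Fin p → k}, WordD p k v d w → ∀ d', d = d' + 1 →
      wittOp2 p k (-1) w ∈ SpanD p k v d' := by
  intro d w h
  induction h with
  | base => intro d' hd'; exact absurd hd' (by omega)
  | step j hj1 hj2 hw ih =>
    intro d' hd'
    rename_i d'' w''
    rw [comm_neg_one (j : ℤ) (by exact_mod_cast Nat.zero_le j) w'']
    apply add_mem
    · rcases Nat.eq_zero_or_pos d'' with hd0 | hdpos
      · subst hd0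
        rw [wordD_zero hw, hker, map_zero]
        exact zero_mem _
      · obtain ⟨e, rfl⟩ : ∃ e, d'' = e + 1 := ⟨d'' - 1, by omega⟩
        have h1 := ih e rfl
        have h2 := op_spanD j hj1 hj2 h1
        have h3 : e + j = d' := by omega
        rwa [h3] at h2
    · show (((j : ℤ) + 1 : ℤ) : k) • wittOp2 p k ((j : ℤ) - 1) w'' ∈ _
      apply Submodule.smul_mem
      rcases eq_or_lt_of_le hj1 with hj | hj
      · have hjz : ((j : ℤ) - 1) = 0 := by omega
        rw [hjz, e0_smul (wordD_degComp hv hw)]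
        apply Submodule.smul_mem
        have h4 : d'' = d' := by omega
        exact h4 ▸ Submodule.subset_span hw
      · have hjz : ((j : ℤ) - 1) = ((j - 1 : ℕ) : ℤ) := by omega
        rw [hjz]
        have h5 : wittOp2 p k ((j - 1 : ℕ) : ℤ) w'' ∈ SpanD p k v (d'' + (j - 1)) :=
          Submodule.subset_span (WordD.step (j - 1) (by omega) (by omega) hw)
        have h6 : d'' + (j - 1) = d' := by omega
        exact h6 ▸ h5

lemma spanD_le_gen (d : ℕ) : SpanD p k v d ≤ genSubmodule p k v := by
  rw [SpanD, Submodule.span_le]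
  intro w hw
  have H : ∀ d w, WordD p k v d w → w ∈ genSubmodule p k v := by
    intro e x h
    induction h with
    | base =>
      rw [genSubmodule, Submodule.mem_sInf]
      intro N hN
      exact hN.1
    | step j hj1 hj2 hx ih =>
      rw [genSubmodule, Submodule.mem_sInf]
      intro N hN
      refine hN.2 (j : ℤ) (by omega) hj2 _ ?_
      rw [genSubmodule, Submodule.mem_sInf] at ih
      exact ih N hN
  exact H d w hw

lemma op_spD (hv : v ∈ degComp p k i) (hker : wittOp2 p k (-1) v = 0) (j : ℤ)
    (hj1 : -1 ≤ j) (hj2 : j ≤ (p : ℤ) - 2) (m : ℤ) :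
    ∀ w ∈ SpD p k v i m, wittOp2 p k j w ∈ SpD p k v i (m + j) := by
  intro w hw
  refine Submodule.span_induction ?_ ?_ ?_ ?_ hw
  · rintro x ⟨d, hm, hx⟩
    rcases lt_trichotomy j 0 with hneg | hj0
    · have hj' : j = -1 := by omega
      subst hj'
      rcases Nat.eq_zero_or_pos d with h0 | hpos
      · subst h0
        rw [wordD_zero hx, hker]
        exact zero_mem _
      · obtain ⟨d', rfl⟩ : ∃ d', d = d' + 1 := ⟨d - 1, by omega⟩
        have h1 := wordD_F hv hker hx d' rfl
        refine Submodule.span_le.mpr ?_ h1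
        intro w' hw'
        exact Submodule.subset_span ⟨d', by push_cast at hm ⊢; omega, hw'⟩
    rcases hj0 with rfl | hpos
    · rw [e0_smul (wordD_degComp hv hx)]
      apply Submodule.smul_mem
      exact Submodule.subset_span ⟨d, by omega, hx⟩
    · have hjn : ((j.toNat : ℕ) : ℤ) = j := Int.toNat_of_nonneg (by omega)
      rw [← hjn]
      refine Submodule.subset_span ⟨d + j.toNat, ?_, WordD.step j.toNat (by omega) (by omega) hx⟩
      push_cast at hm ⊢
      omega
  · rw [map_zero]; exact zero_mem _
  · intro x y hx hy ihx ihy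
    rw [map_add]; exact add_mem ihx ihy
  · intro c x hx ihx
    rw [map_smul]; exact Submodule.smul_mem _ c ihx

lemma gen_le_graded (hv : v ∈ degComp p k i) (hker : wittOp2 p k (-1) v = 0) :
    genSubmodule p k v ≤ ⨅ m : ℤ, Submodule.comap (piF p k m) (SpD p k v i m) := by
  apply sInf_le
  refine ⟨?_, ?_⟩
  · rw [Submodule.mem_iInf]
    intro m
    rw [Submodule.mem_comap]
    by_cases hm : m = (i : ℤ)
    · subst hm
      rw [piF_eq_self hv]
      exact Submodule.subset_span ⟨0, by push_cast; ring, WordD.base⟩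
    · rw [piF_eq_zero hv hm]
      exact zero_mem _
  · intro j hj1 hj2 f hf
    rw [Submodule.mem_iInf] at hf ⊢
    intro m
    rw [Submodule.mem_comap]
    have h1 := hf (m - j)
    rw [Submodule.mem_comap] at h1
    rw [pi_op]
    have h2 := op_spD hv hker j hj1 hj2 (m - j) _ h1
    rwa [sub_add_cancel] at h2

lemma mem_spanD_of (hv : v ∈ degComp p k i) (hker : wittOp2 p k (-1) v = 0) {l : ℕ}
    {w : Fin p × Fin p → k} (h1 : w ∈ genSubmodule p k v) (h2 : w ∈ degComp p k (i + l)) :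
    w ∈ SpanD p k v l := by
  have hT := gen_le_graded hv hker h1
  rw [Submodule.mem_iInf] at hT
  have h3 := hT ((i + l : ℕ) : ℤ)
  rw [Submodule.mem_comap, piF_eq_self h2] at h3
  refine Submodule.span_le.mpr ?_ h3
  rintro x ⟨d, hd, hx⟩
  have h4 : d = l := by push_cast at hd; omega
  exact h4 ▸ Submodule.subset_span hx

end WittAux

namespace WittAux

variable {p : ℕ} {k : Type} [Field k] [CharP k p] {v : Fin p × Fin p → k} {i : ℕ}

lemma eJ_mem_map (hp : p.Prime) (hv : v ∈ degComp p k i)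
    (hker : wittOp2 p k (-1) v = 0) (l : ℕ) (hl : l < p - 2) :
    ∀ t j : ℕ, 1 ≤ j → j + t = l → ∀ w ∈ SpanD p k v t,
      wittOp2 p k (j : ℤ) w ∈ Submodule.map (wittOp2 p k (-1)) (SpanD p k v (l + 1)) := by
  intro t
  induction t with
  | zero =>
    intro j hj1 hjl w hw
    refine Submodule.span_induction ?_ ?_ ?_ ?_ hw
    · intro x hx
      have hxv : x = v := wordD_zero hx
      subst hxv
      have hc := comm_neg_one (p := p) (k := k) ((j : ℤ) + 1) (by omega) x
      rw [hker, map_zero, zero_add, show ((j : ℤ) + 1 - 1) = (j : ℤ) by ring] at hc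
      set c : k := (((j : ℤ) + 1 + 1 : ℤ) : k) with hcdef
      have hcne : c ≠ 0 := by
        have h2 : (((j + 2 : ℕ)) : k) ≠ 0 := natCast_ne hp (by omega) (by omega)
        have h3 : c = (((j + 2 : ℕ)) : k) := by rw [hcdef]; push_cast; ring
        rw [h3]; exact h2
      refine Submodule.mem_map.mpr ⟨c⁻¹ • wittOp2 p k ((j : ℤ) + 1) x, ?_, ?_⟩
      · apply Submodule.smul_mem
        have hs := WordD.step (p := p) (k := k) (v := x) (j + 1) (by omega) (by omega)
          WordD.base
        rw [show 0 + (j + 1) = l + 1 by omega,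
          show (((j + 1 : ℕ)) : ℤ) = (j : ℤ) + 1 by push_cast; ring] at hs
        exact Submodule.subset_span hs
      · rw [map_smul, hc, smul_smul, inv_mul_cancel₀ hcne, one_smul]
    · rw [map_zero]; exact zero_mem _
    · intro x y hx hy ihx ihy
      rw [map_add]; exact add_mem ihx ihy
    · intro a x hx ihx
      rw [map_smul]; exact Submodule.smul_mem _ a ihx
  | succ t' ih =>
    intro j hj1 hjl w hw
    refine Submodule.span_induction ?_ ?_ ?_ ?_ hw
    · intro x hx
      have hc := comm_neg_one (p := p) (k := k) ((j : ℤ) + 1) (by omega) x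
      rw [show ((j : ℤ) + 1 - 1) = (j : ℤ) by ring] at hc
      set c : k := (((j : ℤ) + 1 + 1 : ℤ) : k) with hcdef
      have hcne : c ≠ 0 := by
        have h2 : (((j + 2 : ℕ)) : k) ≠ 0 := natCast_ne hp (by omega) (by omega)
        have h3 : c = (((j + 2 : ℕ)) : k) := by rw [hcdef]; push_cast; ring
        rw [h3]; exact h2
      have hgoal : wittOp2 p k (j : ℤ) x = c⁻¹ •
          (wittOp2 p k (-1) (wittOp2 p k ((j : ℤ) + 1) x)
            - wittOp2 p k ((j : ℤ) + 1) (wittOp2 p k (-1) x)) := by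
        rw [hc, add_sub_cancel_left, smul_smul, inv_mul_cancel₀ hcne, one_smul]
      rw [hgoal]
      apply Submodule.smul_mem
      apply sub_mem
      · have hs := WordD.step (p := p) (k := k) (v := v) (j + 1) (by omega) (by omega) hx
        rw [show (t' + 1) + (j + 1) = (l + 1) + 1 - 1 by omega] at hs
        rw [show (((j + 1 : ℕ)) : ℤ) = (j : ℤ) + 1 by push_cast; ring] at hs
        have hs2 : wittOp2 p k ((j : ℤ) + 1) x ∈ SpanD p k v (l + 1) := by
          have he : (l + 1) + 1 - 1 = l + 1 := by omega
          exact he ▸ Submodule.subset_span hs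
        exact Submodule.mem_map_of_mem hs2
      · have hF := wordD_F hv hker hx t' rfl
        have h4 := ih (j + 1) (by omega) (by omega) _ hF
        rwa [show (((j + 1 : ℕ)) : ℤ) = (j : ℤ) + 1 by push_cast; ring] at h4
    · rw [map_zero]; exact zero_mem _
    · intro x y hx hy ihx ihy
      rw [map_add]; exact add_mem ihx ihy
    · intro a x hx ihx
      rw [map_smul]; exact Submodule.smul_mem _ a ihx

lemma word_mem_map (hp : p.Prime) (hp3 : 3 < p) (hv : v ∈ degComp p k i)
    (hker : wittOp2 p k (-1) v = 0) (hwt : ¬ (p ∣ i)) {d : ℕ} (hd : d < p - 2)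
    {w : Fin p × Fin p → k} (h : WordD p k v d w) :
    w ∈ Submodule.map (wittOp2 p k (-1)) (SpanD p k v (d + 1)) := by
  cases h with
  | base =>
    have hc := comm_neg_one (p := p) (k := k) 1 (by norm_num) v
    rw [hker, map_zero, zero_add, show ((1 : ℤ) - 1) = 0 by ring, e0_smul hv] at hc
    set c : k := (((1 : ℤ) + 1 : ℤ) : k) * ((i : ℕ) : k) with hcdef
    have hc2 : wittOp2 p k (-1) (wittOp2 p k 1 v) = c • v := by
      rw [hc, smul_smul]
    have hcne : c ≠ 0 := by
      apply mul_ne_zero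
      · have h2 : (((2 : ℕ)) : k) ≠ 0 := natCast_ne hp (by omega) (by omega)
        have h3 : (((1 : ℤ) + 1 : ℤ) : k) = (((2 : ℕ)) : k) := by push_cast; ring
        rw [h3]; exact h2
      · rw [Ne, CharP.cast_eq_zero_iff k p i]
        exact hwt
    refine Submodule.mem_map.mpr ⟨c⁻¹ • wittOp2 p k 1 v, ?_, ?_⟩
    · apply Submodule.smul_mem
      have hs := WordD.step (p := p) (k := k) (v := v) 1 (by omega) (by omega) WordD.base
      rw [show ((1 : ℕ) : ℤ) = (1 : ℤ) by norm_num] at hs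
      exact Submodule.subset_span hs
    · rw [map_smul, hc2, smul_smul, inv_mul_cancel₀ hcne, one_smul]
  | step j hj1 hj2 hx =>
    rename_i d'' x
    exact eJ_mem_map hp hv hker (d'' + j) hd d'' j hj1 (by omega) x
      (Submodule.subset_span hx)

end WittAux

/-- let `V ⊆ A_{(2)}` be the `ℤ`-graded `W(1)`-submodule generated by a
homogeneous element `v ∈ A_i` with `e_{-1}·v = 0` and `e_0`-weight `i ≢ 0 (mod p)`.
Then for `0 ≤ l < p-2` the operator `e_{-1} : V_{i+l+1} → V_{i+l}` is surjective. -/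
theorem e_neg_one_surjective_on_graded_pieces (p : ℕ) (k : Type) [Field k] [IsAlgClosed k]
    [CharP k p] (hp : p.Prime) (hp3 : 3 < p) (i : ℕ) (v : Fin p × Fin p → k)
    (hv : v ∈ degComp p k i) (hker : wittOp2 p k (-1) v = 0) (hwt : ¬ (p ∣ i)) :
    ∀ l : ℕ, l < p - 2 → ∀ w ∈ genSubmodule p k v ⊓ degComp p k (i + l),
      ∃ u ∈ genSubmodule p k v ⊓ degComp p k (i + l + 1), wittOp2 p k (-1) u = w := by
  intro l hl w hw
  obtain ⟨hw1, hw2⟩ := hw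
  have hspan := WittAux.mem_spanD_of hv hker hw1 hw2
  have hmap : w ∈ Submodule.map (wittOp2 p k (-1)) (WittAux.SpanD p k v (l + 1)) := by
    refine Submodule.span_le.mpr ?_ hspan
    intro x hx
    exact WittAux.word_mem_map hp hp3 hv hker hwt hl hx
  obtain ⟨u, hu, hFu⟩ := Submodule.mem_map.mp hmap
  refine ⟨u, ⟨WittAux.spanD_le_gen (l + 1) hu, ?_⟩, hFu⟩
  have h2 := WittAux.spanD_le_degComp hv (l + 1) hu
  rwa [show i + (l + 1) = i + l + 1 by omega] at h2
end

section
/- The graded module A_s^+ (the symmetric top level of A(1)⊗A(1)) is a cyclic W(1)-module generated by the class of x_1x_2: the submodule generated by v_{2,s} = x_1x_2 equals all of A_s^+, which has dimension p(p−1)/2. -/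
/-! Since `2` is invertible, `A_s` is spanned by the symmetrized monomials
`x₁^a x₂^b + x₁^b x₂^a`. Those with `b = 0` span `A_s'`; `e_{c-1}` sends `x₁x₂` to
`x₁^c x₂ + x₁ x₂^c`, and `e_{b-1}` sends that to `a (x₁^{a+b-1} x₂ + x₁ x₂^{a+b-1}) +
(x₁^a x₂^b + x₁^b x₂^a)`, so every spanning vector lies in any `W(1)`-stable subspace containing
`x₁x₂` and `A_s'`. As `A_s` is itself stable, it is the smallest such subspace, and
`dim A_s⁺ = p(p+1)/2 - p`. -/

set_option synthInstance.maxHeartbeats 1000000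
set_option maxHeartbeats 1000000

lemma Submodule.finrank_map_mkQ_add_finrank {K V : Type*} [DivisionRing K] [AddCommGroup V]
    [Module K V] [FiniteDimensional K V] {N M : Submodule K V} (h : N ≤ M) :
    Module.finrank K (M.map N.mkQ) + Module.finrank K N = Module.finrank K M := by
  have := LinearMap.finrank_range_add_finrank_ker (N.mkQ ∘ₗ M.subtype)
  rwa [LinearMap.range_comp, Submodule.range_subtype, LinearMap.ker_comp, Submodule.ker_mkQ,
    (Submodule.comapSubtypeEquivOfLe h).finrank_eq] at this

/-- The monomial `x₁^a x₂^b` with integer exponents; it is `0` when an exponent lies outside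
`[0, p-1]`, which is exactly how `wittOp2` truncates. -/
def monoInt (p : ℕ) (k : Type) [Field k] (a b : ℤ) : Fin p × Fin p → k :=
  fun q => if (q.1 : ℤ) = a ∧ (q.2 : ℤ) = b then 1 else 0

def symmMono (p : ℕ) (k : Type) [Field k] (a b : ℤ) : Fin p × Fin p → k :=
  monoInt p k a b + monoInt p k b a

section Monomials

variable (p : ℕ) (k : Type) [Field k]

lemma mono_eq_monoInt (a b : ℕ) : mono p k a b = monoInt p k a b := by
  funext q; simp [mono, monoInt]

lemma monoInt_eq_single (a b : Fin p) : monoInt p k a b = Pi.single (a, b) 1 := by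
  funext q
  simp only [monoInt, Pi.single_apply, Prod.ext_iff, Fin.ext_iff, Nat.cast_inj]

lemma monoInt_eq_zero {a b : ℤ} (h : ¬ (0 ≤ a ∧ a < p ∧ 0 ≤ b ∧ b < p)) :
    monoInt p k a b = 0 := by
  funext q
  refine if_neg ?_
  rintro ⟨rfl, rfl⟩
  exact h ⟨by positivity, by exact_mod_cast q.1.isLt, by positivity, by exact_mod_cast q.2.isLt⟩

lemma symmMono_comm (a b : ℤ) : symmMono p k a b = symmMono p k b a :=
  add_comm _ _

lemma symmMono_eq_zero {a b : ℤ} (h : ¬ (0 ≤ a ∧ a < p ∧ 0 ≤ b ∧ b < p)) :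
    symmMono p k a b = 0 := by
  rw [symmMono, monoInt_eq_zero p k h, monoInt_eq_zero p k (by tauto), add_zero]

lemma symmMono_apply (q r : Fin p × Fin p) :
    symmMono p k q.1 q.2 r = (if q = r then 1 else 0) + (if q = r.swap then 1 else 0) := by
  simp only [symmMono, monoInt_eq_single, Pi.add_apply, Pi.single_apply, Prod.ext_iff,
    Prod.fst_swap, Prod.snd_swap]
  congr 1 <;> exact if_congr (by tauto) rfl rfl

lemma two_smul_eq_sum_symmMono {f : Fin p × Fin p → k} (hf : f ∈ symmPart p k) :
    (2 : k) • f = ∑ q : Fin p × Fin p, f q • symmMono p k q.1 q.2 := by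
  funext r
  simp only [Finset.sum_apply, Pi.smul_apply, smul_eq_mul, symmMono_apply, mul_add, mul_ite,
    mul_one, mul_zero, Finset.sum_add_distrib, Finset.sum_ite_eq', Finset.mem_univ, if_true]
  rw [show f r.swap = f r from hf r]
  ring

end Monomials

section Action

variable (p : ℕ) (k : Type) [Field k]

lemma wittOp2_monoInt (j : ℤ) {a b : ℤ} (ha : 0 ≤ a) (hap : a < p) (hb : 0 ≤ b) (hbp : b < p) :
    wittOp2 p k j (monoInt p k a b) =
      (a : k) • monoInt p k (a + j) b + (b : k) • monoInt p k a (b + j) := by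
  lift a to ℕ using ha
  lift b to ℕ using hb
  have hap : a < p := by exact_mod_cast hap
  have hbp : b < p := by exact_mod_cast hbp
  rw [show (a : ℤ) = ((⟨a, hap⟩ : Fin p) : ℤ) from rfl,
    show (b : ℤ) = ((⟨b, hbp⟩ : Fin p) : ℤ) from rfl, monoInt_eq_single, wittOp2,
    Matrix.toLin'_apply, Matrix.mulVec_single_one]
  funext q
  simp only [Matrix.col_apply, Matrix.of_apply, Pi.add_apply, Pi.smul_apply, monoInt,
    smul_eq_mul, Fin.ext_iff]
  congr 1 <;> split_ifs <;> simp only [mul_one, mul_zero] <;>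
    first | rfl | (congr 1; omega)

lemma wittOp2_symmMono (j : ℤ) {a b : ℤ} (ha : 0 ≤ a) (hap : a < p) (hb : 0 ≤ b) (hbp : b < p) :
    wittOp2 p k j (symmMono p k a b) =
      (a : k) • symmMono p k (a + j) b + (b : k) • symmMono p k a (b + j) := by
  rw [symmMono, map_add, wittOp2_monoInt p k j ha hap hb hbp, wittOp2_monoInt p k j hb hbp ha hap,
    symmMono, symmMono, smul_add, smul_add]
  abel

lemma wittOp2_mem_symmPart (j : ℤ) {f : Fin p × Fin p → k} (hf : f ∈ symmPart p k) :
    wittOp2 p k j f ∈ symmPart p k := by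
  intro q
  simp only [wittOp2, Matrix.toLin'_apply, Matrix.mulVec, dotProduct, Matrix.of_apply]
  refine Fintype.sum_equiv (Equiv.prodComm (Fin p) (Fin p)) _ _ fun r => ?_
  rw [Equiv.prodComm_apply, Prod.swap, hf r, add_comm]
  congr 2 <;> exact if_congr and_comm rfl rfl

lemma mono_one_one_mem_symmPart : mono p k 1 1 ∈ symmPart p k :=
  fun _ => if_congr and_comm rfl rfl

lemma symmPrime_le_symmPart : symmPrime p k ≤ symmPart p k := by
  rw [symmPrime, Submodule.span_le]
  rintro _ ⟨i, rfl⟩ q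
  simp only [Pi.add_apply, mono]
  rw [add_comm]
  congr 1 <;> exact if_congr and_comm rfl rfl

end Action

section Generation

variable {p : ℕ} {k : Type} [Field k] {N : Submodule k (Fin p × Fin p → k)}

lemma symmMono_zero_mem (hN : symmPrime p k ≤ N) {i : ℕ} (hi : i < p) :
    symmMono p k i 0 ∈ N := by
  have h : mono p k i 0 + mono p k 0 i ∈ symmPrime p k :=
    Submodule.subset_span ⟨⟨i, hi⟩, rfl⟩
  simpa [mono_eq_monoInt, symmMono] using hN h

variable (hp1 : 1 < p) (h11 : mono p k 1 1 ∈ N) (hN : symmPrime p k ≤ N)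
  (hstable : ∀ j : ℤ, 0 ≤ j → j ≤ (p : ℤ) - 2 → ∀ f ∈ N, wittOp2 p k j f ∈ N)
include hp1 h11 hN hstable

lemma symmMono_one_mem {c : ℤ} (hc : 0 ≤ c) : symmMono p k c 1 ∈ N := by
  have hp' : (1 : ℤ) < p := by exact_mod_cast hp1
  obtain rfl | hc := hc.eq_or_lt
  · rw [symmMono_comm]
    exact_mod_cast symmMono_zero_mem hN hp1
  by_cases hcp : c < p
  · have hw := hstable (c - 1) (by omega) (by omega) _ h11
    rwa [mono_eq_monoInt, Nat.cast_one, wittOp2_monoInt p k _ zero_le_one hp' zero_le_one hp',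
      Int.cast_one, one_smul, one_smul, add_sub_cancel] at hw
  · rw [symmMono_eq_zero p k (by omega)]
    exact N.zero_mem

lemma symmMono_mem (q : Fin p × Fin p) : symmMono p k q.1 q.2 ∈ N := by
  obtain ⟨⟨a, ha⟩, ⟨b, hb⟩⟩ := q
  rcases Nat.eq_zero_or_pos b with rfl | hb0
  · exact symmMono_zero_mem hN ha
  rcases Nat.eq_zero_or_pos a with rfl | ha0
  · rw [symmMono_comm]
    exact symmMono_zero_mem hN hb
  have hp' : (1 : ℤ) < p := by exact_mod_cast hp1
  have hw := hstable (b - 1) (by omega) (by omega) _ (symmMono_one_mem hp1 h11 hN hstable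
    (Int.natCast_nonneg a))
  rw [wittOp2_symmMono p k _ (by omega) (by omega) zero_le_one hp', Int.cast_one, one_smul,
    add_sub_cancel] at hw
  simpa using N.sub_mem hw (N.smul_mem (a : k) (symmMono_one_mem hp1 h11 hN hstable
    (c := a + (b - 1)) (by omega)))

lemma symmPart_le_of_stable (h2 : (2 : k) ≠ 0) : symmPart p k ≤ N := by
  intro f hf
  rw [← inv_smul_smul₀ h2 f, two_smul_eq_sum_symmMono p k hf]
  exact N.smul_mem _ (N.sum_mem fun q _ => N.smul_mem _ (symmMono_mem hp1 h11 hN hstable q))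

end Generation

section Dimension

variable (p : ℕ) (k : Type) [Field k]

def symmPartEquiv : symmPart p k ≃ₗ[k] ({q : Fin p × Fin p // q.1 ≤ q.2} → k) where
  toFun f s := f.1 s.1
  map_add' _ _ := rfl
  map_smul' _ _ := rfl
  invFun g := ⟨fun q => if h : q.1 ≤ q.2 then g ⟨q, h⟩ else g ⟨q.swap, le_of_not_ge h⟩, by
    rintro ⟨a, b⟩
    rcases lt_trichotomy a b with h | rfl | h
    · simp [h.le, not_le.mpr h]
    · rfl
    · simp [h.le, not_le.mpr h]⟩
  left_inv f := by
    ext ⟨a, b⟩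
    by_cases h : a ≤ b
    · simp [h]
    · simpa [h] using f.2 (a, b)
  right_inv g := by
    ext ⟨q, h⟩
    simp [h]

lemma finrank_symmPart : Module.finrank k (symmPart p k) = p * (p + 1) / 2 := by
  rw [(symmPartEquiv p k).finrank_eq, Module.finrank_fintype_fun_eq_card,
    ← Fintype.card_congr Sym2.sortEquiv, Sym2.card, Fintype.card_fin, Nat.choose_two_right,
    Nat.add_sub_cancel, mul_comm]

lemma linearIndependent_symmPrime (h2 : (2 : k) ≠ 0) :
    LinearIndependent k (fun i : Fin p => mono p k i 0 + mono p k 0 i) := by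
  rw [Fintype.linearIndependent_iff]
  intro g hg i
  have key := congrFun hg (i, ⟨0, i.pos⟩)
  simp only [Finset.sum_apply, Pi.smul_apply, Pi.add_apply, mono, smul_eq_mul, mul_add, mul_ite,
    mul_one, mul_zero, Finset.sum_add_distrib, and_true, Fin.val_inj, Finset.sum_ite_eq,
    Finset.mem_univ, if_true, Pi.zero_apply] at key
  by_cases hi : (i : ℕ) = 0
  · simp only [hi, true_and] at key
    simp only [← hi, Fin.val_inj, Finset.sum_ite_eq, Finset.mem_univ, if_true, ← two_mul] at key
    exact (mul_eq_zero.mp key).resolve_left h2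
  · simpa [hi] using key

lemma finrank_symmPrime (h2 : (2 : k) ≠ 0) : Module.finrank k (symmPrime p k) = p := by
  rw [symmPrime, finrank_span_eq_card (linearIndependent_symmPrime p k h2), Fintype.card_fin]

end Dimension

theorem symm_top_level_cyclic_general (p : ℕ) (k : Type) [Field k] [CharP k p]
    (hp3 : 3 < p) :
    sInf {N : Submodule k (Fin p × Fin p → k) |
        mono p k 1 1 ∈ N ∧ symmPrime p k ≤ N ∧
        ∀ j : ℤ, -1 ≤ j → j ≤ (p : ℤ) - 2 → ∀ f ∈ N, wittOp2 p k j f ∈ N} =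
      symmPart p k ∧
    Module.finrank k ↥(Submodule.map (symmPrime p k).mkQ (symmPart p k)) =
      p * (p - 1) / 2 := by
  have h2 : (2 : k) ≠ 0 := fun h => by
    have := Nat.le_of_dvd two_pos ((CharP.cast_eq_zero_iff k p 2).mp (by exact_mod_cast h))
    omega
  refine ⟨le_antisymm ?_ ?_, ?_⟩
  · exact sInf_le ⟨mono_one_one_mem_symmPart p k, symmPrime_le_symmPart p k,
      fun j _ _ _ hf => wittOp2_mem_symmPart p k j hf⟩
  · exact le_sInf fun N ⟨h11, hN, hstable⟩ => symmPart_le_of_stable (by omega) h11 hN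
      (fun j hj => hstable j (by omega)) h2
  · have h := Submodule.finrank_map_mkQ_add_finrank (symmPrime_le_symmPart p k)
    rw [finrank_symmPart, finrank_symmPrime p k h2] at h
    obtain ⟨n, rfl⟩ : ∃ n, p = n + 1 := ⟨p - 1, by omega⟩
    rw [show (n + 1) * (n + 1 + 1) = (n + 1) * n + (n + 1) * 2 by ring,
      Nat.add_mul_div_right _ _ two_pos] at h
    simpa using h

/-- the symmetric top level `A_s⁺ = A_s/A_s'` is a cyclic `W(1)`-module
generated by the class of `v_{2,s} = x₁x₂`: the smallest subspace of `A_{(2)}`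
containing `A_s'` and `x₁x₂` and stable under all `e_j` is `A_s` itself (so the image
in the quotient is everything), and `dim A_s⁺ = p(p−1)/2`. -/
theorem symm_top_level_cyclic (p : ℕ) (k : Type) [Field k] [IsAlgClosed k] [CharP k p]
    (hp : p.Prime) (hp3 : 3 < p) :
    sInf {N : Submodule k (Fin p × Fin p → k) |
        mono p k 1 1 ∈ N ∧ symmPrime p k ≤ N ∧
        ∀ j : ℤ, -1 ≤ j → j ≤ (p : ℤ) - 2 → ∀ f ∈ N, wittOp2 p k j f ∈ N} =
      symmPart p k ∧
    Module.finrank k ↥(Submodule.map (symmPrime p k).mkQ (symmPart p k)) =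
      p * (p - 1) / 2 :=
  symm_top_level_cyclic_general p k hp3
end
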